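/- arXiv:1807.05082 — 8 statements merged into one kernel-verified Lean document; each statement's English description precedes it below -/
import Mathlib

section
/- (Komaroff upper bound for the filtering Riccati equation) Under the stated assumptions, the positive definite solution Σ of the discrete algebraic Riccati equation satisfies Σ ⪯ A (Cᵀ V⁻¹ C)⁻¹ Aᵀ + W. -/
open Matrix

/-- Komaroff upper bound: the positive definite solution `S` of the filtering
discrete algebraic Riccati equation satisfies `S ⪯ A (Cᵀ V⁻¹ C)⁻¹ Aᵀ + W`. -/
theorem riccati_komaroff_upper {n : ℕ} (hn : 1 ≤ n)
    (A W S : Matrix (Fin n) (Fin n) ℝ)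
    (c σ : Fin n → ℝ) (hc : ∀ i, 0 < c i) (hσ : ∀ i, 0 < σ i)
    (hW : W.PosDef) (hS : S.PosDef)
    (hric : S = A * S * Aᵀ -
        A * S * (Matrix.diagonal c)ᵀ *
          (Matrix.diagonal c * S * (Matrix.diagonal c)ᵀ +
            Matrix.diagonal fun i => σ i ^ 2)⁻¹ *
          Matrix.diagonal c * S * Aᵀ + W) :
    (A * ((Matrix.diagonal c)ᵀ * (Matrix.diagonal fun i => σ i ^ 2)⁻¹ *
        Matrix.diagonal c)⁻¹ * Aᵀ + W - S).PosSemidef := by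
  set C : Matrix (Fin n) (Fin n) ℝ := Matrix.diagonal c with hCdef
  set V : Matrix (Fin n) (Fin n) ℝ := Matrix.diagonal fun i => σ i ^ 2 with hVdef
  have hV : V.PosDef := .diagonal fun i => pow_pos (hσ i) 2
  have hVinvd : V⁻¹ = Matrix.diagonal fun i => (σ i ^ 2)⁻¹ := by
    apply Matrix.inv_eq_left_inv
    rw [hVdef, diagonal_mul_diagonal]
    have h1 : (fun i => (σ i ^ 2)⁻¹ * σ i ^ 2) = fun _ => (1 : ℝ) :=
      funext fun i => inv_mul_cancel₀ (pow_ne_zero 2 (hσ i).ne')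
    rw [h1]
    exact diagonal_one
  have hN : (Cᵀ * V⁻¹ * C).PosDef := by
    rw [hCdef, hVinvd, diagonal_transpose, diagonal_mul_diagonal, diagonal_mul_diagonal]
    exact .diagonal fun i => by have := hc i; have := hσ i; positivity
  set N : Matrix (Fin n) (Fin n) ℝ := Cᵀ * V⁻¹ * C with hNdef
  have hSinv : (S⁻¹)⁻¹ = S := Matrix.nonsing_inv_nonsing_inv S (hS.isUnit.map detMonoidHom)
  have hVinv : (V⁻¹)⁻¹ = V := Matrix.nonsing_inv_nonsing_inv V (hV.isUnit.map detMonoidHom)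
  have hCSC : (C * S * Cᵀ).PosSemidef := by
    have := hS.posSemidef.mul_mul_conjTranspose_same C
    rwa [conjTranspose_eq_transpose_of_trivial] at this
  have hQ : (C * S * Cᵀ + V).PosDef := Matrix.PosDef.posSemidef_add hCSC hV
  have hSNinv : (S + N⁻¹).PosDef := hS.add_posSemidef hN.inv.posSemidef
  -- Woodbury identity 1
  have hw1 : (S⁻¹ + Cᵀ * V⁻¹ * C)⁻¹ = S - S * Cᵀ * (C * S * Cᵀ + V)⁻¹ * C * S := by
    have := Matrix.add_mul_mul_inv_eq_sub S⁻¹ Cᵀ V⁻¹ C hS.inv.isUnit hV.inv.isUnit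
      (by rw [hVinv, hSinv, add_comm]; exact hQ.isUnit)
    rw [hVinv, hSinv] at this
    rw [this, Matrix.mul_assoc C S Cᵀ, add_comm V]
  -- rewrite the Riccati equation as S = A (S⁻¹ + N)⁻¹ Aᵀ + W
  have hexp : A * (S - S * Cᵀ * (C * S * Cᵀ + V)⁻¹ * C * S) * Aᵀ + W
      = A * S * Aᵀ - A * S * Cᵀ * (C * S * Cᵀ + V)⁻¹ * C * S * Aᵀ + W := by
    noncomm_ring
  have hric' : S = A * (S⁻¹ + N)⁻¹ * Aᵀ + W := by
    rw [hNdef, hw1, hexp]; exact hric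
  -- Woodbury identity 2
  have hw2 : N⁻¹ - (S⁻¹ + N)⁻¹ = N⁻¹ * (S + N⁻¹)⁻¹ * N⁻¹ := by
    have h2 := Matrix.add_mul_mul_inv_eq_sub N 1 S⁻¹ 1 hN.isUnit hS.inv.isUnit
      (by rw [hSinv]; simpa using hSNinv.isUnit)
    simp only [Matrix.mul_one, Matrix.one_mul, hSinv] at h2
    rw [add_comm (S⁻¹) N, h2, sub_sub_cancel]
  have hNinvherm : (N⁻¹)ᴴ = N⁻¹ := hN.inv.isHermitian
  have key : (A * N⁻¹ * Aᵀ + W - S) = (A * N⁻¹) * (S + N⁻¹)⁻¹ * (A * N⁻¹)ᴴ := by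
    conv_lhs => rw [hric']
    have h3 : A * N⁻¹ * Aᵀ + W - (A * (S⁻¹ + N)⁻¹ * Aᵀ + W)
        = A * (N⁻¹ - (S⁻¹ + N)⁻¹) * Aᵀ := by noncomm_ring
    rw [h3, hw2, conjTranspose_mul, hNinvherm, conjTranspose_eq_transpose_of_trivial]
    noncomm_ring
  rw [key]
  exact hSNinv.inv.posSemidef.mul_mul_conjTranspose_same (A * N⁻¹)
end

section
/- (Komaroff lower bound for the filtering Riccati equation) Under the stated assumptions, the positive definite solution Σ of the discrete algebraic Riccati equation satisfies Σ ⪰ A (W⁻¹ + Cᵀ V⁻¹ C)⁻¹ Aᵀ + W. -/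
/-!
The Riccati equation says `Σ = A (Σ⁻¹ + K)⁻¹ Aᵀ + W` with `K = Cᵀ V⁻¹ C ⪰ 0` (Woodbury identity).
Hence `Σ ⪰ W`, so `Σ⁻¹ ⪯ W⁻¹`; since inversion reverses the Loewner order on positive definite
matrices, `X ↦ (X⁻¹ + K)⁻¹` is monotone, and `(Σ⁻¹ + K)⁻¹ ⪰ (W⁻¹ + K)⁻¹`. Conjugating by `A`
and adding `W` gives the bound.
-/

open Matrix

namespace Matrix

variable {ι κ 𝕜 : Type*} [Fintype ι] [DecidableEq ι] [Fintype κ] [DecidableEq κ]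
  [Field 𝕜] [PartialOrder 𝕜] [StarRing 𝕜]

theorem PosDef.inv_inv {M : Matrix ι ι 𝕜} (hM : M.PosDef) : M⁻¹⁻¹ = M :=
  nonsing_inv_nonsing_inv M ((isUnit_iff_isUnit_det M).mp hM.isUnit)

variable [StarOrderedRing 𝕜]

theorem PosDef.posSemidef_inv_sub_inv {P Q : Matrix ι ι 𝕜} (hP : P.PosDef) (hQ : Q.PosDef)
    (h : (P - Q).PosSemidef) : (Q⁻¹ - P⁻¹).PosSemidef := by
  have := hP.isUnit.invertible
  have := hQ.inv.isUnit.invertible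
  -- Both conditions are Schur complements of the block matrix `[[P, 1], [1, Q⁻¹]]`.
  have h₁₁ := PosDef.fromBlocks₁₁ (1 : Matrix ι ι 𝕜) Q⁻¹ hP
  have h₂₂ := PosDef.fromBlocks₂₂ P (1 : Matrix ι ι 𝕜) hQ.inv
  simp only [conjTranspose_one, Matrix.one_mul, Matrix.mul_one, hQ.inv_inv] at h₁₁ h₂₂
  exact h₁₁.mp (h₂₂.mpr h)

theorem PosDef.posSemidef_inv_add_inv_sub_inv_add_inv {X Y K : Matrix ι ι 𝕜} (hX : X.PosDef)
    (hY : Y.PosDef) (hK : K.PosSemidef) (h : (X - Y).PosSemidef) :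
    ((X⁻¹ + K)⁻¹ - (Y⁻¹ + K)⁻¹).PosSemidef := by
  refine (hY.inv.add_posSemidef hK).posSemidef_inv_sub_inv (hX.inv.add_posSemidef hK) ?_
  rw [add_sub_add_right_eq_sub]
  exact hX.posSemidef_inv_sub_inv hY h

theorem PosDef.inv_inv_add_conjTranspose_mul_inv_mul {S : Matrix ι ι 𝕜} {V : Matrix κ κ 𝕜}
    (hS : S.PosDef) (hV : V.PosDef) (C : Matrix κ ι 𝕜) :
    (S⁻¹ + Cᴴ * V⁻¹ * C)⁻¹ = S - S * Cᴴ * (C * S * Cᴴ + V)⁻¹ * C * S := by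
  have hCSC : (V + C * S * Cᴴ).PosDef :=
    hV.add_posSemidef (hS.posSemidef.mul_mul_conjTranspose_same C)
  have hwood := add_mul_mul_inv_eq_sub S⁻¹ Cᴴ V⁻¹ C hS.inv.isUnit hV.inv.isUnit
    (by rw [hV.inv_inv, hS.inv_inv]; exact hCSC.isUnit)
  rw [hwood, hV.inv_inv, hS.inv_inv, add_comm V]

variable {A W S : Matrix ι ι 𝕜} {C : Matrix κ ι 𝕜} {V : Matrix κ κ 𝕜}

theorem sub_eq_of_riccati (hS : S.PosDef) (hV : V.PosDef)
    (hric : S = A * S * Aᴴ - A * S * Cᴴ * (C * S * Cᴴ + V)⁻¹ * C * S * Aᴴ + W) :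
    S - W = A * (S⁻¹ + Cᴴ * V⁻¹ * C)⁻¹ * Aᴴ := by
  rw [hS.inv_inv_add_conjTranspose_mul_inv_mul hV]
  nth_rewrite 1 [hric]
  simp only [Matrix.mul_sub, Matrix.sub_mul, Matrix.mul_assoc]
  abel

theorem posSemidef_sub_komaroff_of_riccati (hW : W.PosDef) (hS : S.PosDef) (hV : V.PosDef)
    (hric : S = A * S * Aᴴ - A * S * Cᴴ * (C * S * Cᴴ + V)⁻¹ * C * S * Aᴴ + W) :
    (S - (A * (W⁻¹ + Cᴴ * V⁻¹ * C)⁻¹ * Aᴴ + W)).PosSemidef := by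
  have hK : (Cᴴ * V⁻¹ * C).PosSemidef := hV.inv.posSemidef.conjTranspose_mul_mul_same C
  have hSW : (S - W).PosSemidef := by
    rw [sub_eq_of_riccati hS hV hric]
    exact (hS.inv.add_posSemidef hK).inv.posSemidef.mul_mul_conjTranspose_same A
  have hmono := hS.posSemidef_inv_add_inv_sub_inv_add_inv hW hK hSW
  have hbound : S - (A * (W⁻¹ + Cᴴ * V⁻¹ * C)⁻¹ * Aᴴ + W) =
      A * ((S⁻¹ + Cᴴ * V⁻¹ * C)⁻¹ - (W⁻¹ + Cᴴ * V⁻¹ * C)⁻¹) * Aᴴ := by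
    rw [Matrix.mul_sub, Matrix.sub_mul, ← sub_eq_of_riccati hS hV hric]
    abel
  rw [hbound]
  exact hmono.mul_mul_conjTranspose_same A

end Matrix

theorem riccati_komaroff_lower_general {n : ℕ}
    (A W S : Matrix (Fin n) (Fin n) ℝ)
    (c σ : Fin n → ℝ) (hσ : ∀ i, 0 < σ i)
    (hW : W.PosDef) (hS : S.PosDef)
    (hric : S = A * S * Aᵀ -
        A * S * (Matrix.diagonal c)ᵀ *
          (Matrix.diagonal c * S * (Matrix.diagonal c)ᵀ +
            Matrix.diagonal fun i => σ i ^ 2)⁻¹ *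
          Matrix.diagonal c * S * Aᵀ + W) :
    (S - (A * (W⁻¹ + (Matrix.diagonal c)ᵀ * (Matrix.diagonal fun i => σ i ^ 2)⁻¹ *
        Matrix.diagonal c)⁻¹ * Aᵀ + W)).PosSemidef := by
  have hV : (Matrix.diagonal fun i => σ i ^ 2).PosDef := PosDef.diagonal fun i => pow_pos (hσ i) 2
  simp only [← conjTranspose_eq_transpose_of_trivial] at hric ⊢
  exact posSemidef_sub_komaroff_of_riccati hW hS hV hric

/-- Komaroff lower bound: the positive definite solution `S` of the filtering
discrete algebraic Riccati equation satisfies `S ⪰ A (W⁻¹ + Cᵀ V⁻¹ C)⁻¹ Aᵀ + W`. -/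
theorem riccati_komaroff_lower {n : ℕ} (hn : 1 ≤ n)
    (A W S : Matrix (Fin n) (Fin n) ℝ)
    (c σ : Fin n → ℝ) (hc : ∀ i, 0 < c i) (hσ : ∀ i, 0 < σ i)
    (hW : W.PosDef) (hS : S.PosDef)
    (hric : S = A * S * Aᵀ -
        A * S * (Matrix.diagonal c)ᵀ *
          (Matrix.diagonal c * S * (Matrix.diagonal c)ᵀ +
            Matrix.diagonal fun i => σ i ^ 2)⁻¹ *
          Matrix.diagonal c * S * Aᵀ + W) :
    (S - (A * (W⁻¹ + (Matrix.diagonal c)ᵀ * (Matrix.diagonal fun i => σ i ^ 2)⁻¹ *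
        Matrix.diagonal c)⁻¹ * Aᵀ + W)).PosSemidef :=
  riccati_komaroff_lower_general A W S c σ hσ hW hS hric
end

section
/- (Trace bounds on the a priori error covariance) Under the stated assumptions, the trace of the positive definite Riccati solution Σ satisfies tr(W) + tr(AᵀA)·λ_min(W)/(1 + λ_min(W)·M) ≤ tr(Σ) ≤ tr(W) + tr(AᵀA)/m. -/
/-!
By the Woodbury identity the Riccati equation reads `Σ = A P⁻¹ Aᵀ + W` with `P = Σ⁻¹ + CᵀV⁻¹C`,
so `tr Σ = tr W + tr (A P⁻¹ Aᵀ)`, and it suffices to squeeze `P⁻¹` between multiples of `1` in the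
Loewner order; against scalars, inversion is order reversing (compare spectra). Since
`CᵀV⁻¹C ≥ m • 1`, `P ≥ m • 1` gives the upper bound. Since `Σ ≥ W ≥ λ_min(W) • 1`, we get
`Σ⁻¹ ≤ λ_min(W)⁻¹ • 1`, hence `P ≤ (λ_min(W)⁻¹ + M) • 1`, which gives the lower bound.
-/

open Matrix
open scoped MatrixOrder

namespace CFC

variable {A : Type*} [Ring A] [StarRing A] [TopologicalSpace A] [Algebra ℝ A] [PartialOrder A]
  [StarOrderedRing A] [ContinuousFunctionalCalculus ℝ A IsSelfAdjoint] [NonnegSpectrumClass ℝ A]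

theorem inv_le_algebraMap_inv [StarModule ℝ A] {a : Aˣ} {r : ℝ} (hr : 0 < r)
    (h : algebraMap ℝ A r ≤ a) :
    (↑a⁻¹ : A) ≤ algebraMap ℝ A r⁻¹ := by
  have ha : IsSelfAdjoint (a : A) := by
    simpa using (IsSelfAdjoint.of_nonneg (sub_nonneg.mpr h)).add (.algebraMap A (.all r))
  have hspec := (algebraMap_le_iff_le_spectrum ha).mp h
  rw [← cfc_inv_id (R := ℝ) a, cfc_le_algebraMap_iff _ _ _ ?_]
  · exact fun x hx => inv_anti₀ hr (hspec x hx)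
  · exact continuousOn_inv₀.mono fun x hx => (hr.trans_le (hspec x hx)).ne'

theorem algebraMap_inv_le_inv {a : Aˣ} {r : ℝ} (ha : 0 ≤ (a : A))
    (h : (a : A) ≤ algebraMap ℝ A r) :
    algebraMap ℝ A r⁻¹ ≤ (↑a⁻¹ : A) := by
  have hpos : ∀ x ∈ spectrum ℝ (a : A), 0 < x := fun x hx =>
    (spectrum_nonneg_of_nonneg ha hx).lt_of_ne' fun h0 =>
      (spectrum.zero_notMem_iff ℝ).mpr a.isUnit (h0 ▸ hx)
  have hspec := (le_algebraMap_iff_spectrum_le (IsSelfAdjoint.of_nonneg ha)).mp h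
  rw [← cfc_inv_id (R := ℝ) a, algebraMap_le_cfc_iff _ _ _ ?_]
  · exact fun x hx => inv_anti₀ (hpos x hx) (hspec x hx)
  · exact continuousOn_inv₀.mono fun x hx => (hpos x hx).ne'

end CFC

namespace Matrix

variable {ι : Type*}

theorem PosDef.inv_le_smul_one [Fintype ι] [DecidableEq ι] {P : Matrix ι ι ℝ} (hP : P.PosDef)
    {r : ℝ} (hr : 0 < r) (h : r • 1 ≤ P) : P⁻¹ ≤ r⁻¹ • 1 := by
  simpa [Algebra.algebraMap_eq_smul_one] using CFC.inv_le_algebraMap_inv (a := hP.isUnit.unit) hr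
    (by simpa [Algebra.algebraMap_eq_smul_one] using h)

theorem PosDef.inv_smul_one_le_inv [Fintype ι] [DecidableEq ι] {P : Matrix ι ι ℝ}
    (hP : P.PosDef) {r : ℝ} (h : P ≤ r • 1) : r⁻¹ • 1 ≤ P⁻¹ := by
  simpa [Algebra.algebraMap_eq_smul_one] using
    CFC.algebraMap_inv_le_inv (a := hP.isUnit.unit) hP.posSemidef.nonneg
      (by simpa [Algebra.algebraMap_eq_smul_one] using h)

theorem IsHermitian.iInf_eigenvalues_smul_one_le [Fintype ι] [DecidableEq ι] {A : Matrix ι ι ℝ}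
    (hA : A.IsHermitian) : (⨅ i, hA.eigenvalues i) • 1 ≤ A := by
  rw [← Algebra.algebraMap_eq_smul_one, algebraMap_le_iff_le_spectrum hA.isSelfAdjoint,
    hA.spectrum_real_eq_range_eigenvalues]
  rintro _ ⟨i, rfl⟩
  exact ciInf_le (Set.finite_range _).bddBelow i

theorem smul_one_le_diagonal [DecidableEq ι] {d : ι → ℝ} {r : ℝ} (h : ∀ i, r ≤ d i) :
    r • 1 ≤ diagonal d := by
  rw [le_iff, smul_one_eq_diagonal, diagonal_sub]
  exact PosSemidef.diagonal fun i => sub_nonneg.mpr (h i)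

theorem diagonal_le_smul_one [DecidableEq ι] {d : ι → ℝ} {r : ℝ} (h : ∀ i, d i ≤ r) :
    diagonal d ≤ r • 1 := by
  rw [le_iff, smul_one_eq_diagonal, diagonal_sub]
  exact PosSemidef.diagonal fun i => sub_nonneg.mpr (h i)

theorem transpose_diagonal_mul_inv_diagonal_mul_diagonal [Fintype ι] [DecidableEq ι] {K : Type*}
    [Field K] (c : ι → K) {v : ι → K} (hv : ∀ i, v i ≠ 0) :
    (diagonal c)ᵀ * (diagonal v)⁻¹ * diagonal c = diagonal fun i => c i ^ 2 / v i := by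
  have hinv : (diagonal v)⁻¹ = diagonal v⁻¹ :=
    inv_eq_left_inv (by simp [diagonal_mul_diagonal, hv])
  rw [diagonal_transpose, hinv, diagonal_mul_diagonal, diagonal_mul_diagonal]
  congr 1
  ext i
  simp only [Pi.inv_apply]
  ring

theorem trace_mul_mul_transpose_mono [Fintype ι] {m : Type*} [Fintype m] (A : Matrix m ι ℝ)
    {X Y : Matrix ι ι ℝ} (h : X ≤ Y) : (A * X * Aᵀ).trace ≤ (A * Y * Aᵀ).trace := by
  have := (h.mul_mul_conjTranspose_same A).trace_nonneg
  rwa [conjTranspose_eq_transpose_of_trivial, Matrix.mul_sub, Matrix.sub_mul, trace_sub,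
    sub_nonneg] at this

theorem trace_mul_smul_one_mul_transpose [Fintype ι] [DecidableEq ι] {m : Type*} [Fintype m]
    (A : Matrix m ι ℝ) (r : ℝ) :
    (A * (r • (1 : Matrix ι ι ℝ)) * Aᵀ).trace = r * (Aᵀ * A).trace := by
  rw [Matrix.mul_smul, Matrix.mul_one, Matrix.smul_mul, trace_smul, trace_mul_comm, smul_eq_mul]

end Matrix

section Riccati

variable {ι : Type*} [Fintype ι] [DecidableEq ι]

theorem riccati_information_form {m : Type*} [Fintype m] [DecidableEq m]
    {A W S : Matrix ι ι ℝ} {C : Matrix m ι ℝ} {V : Matrix m m ℝ} (hS : S.PosDef) (hV : V.PosDef)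
    (hric : S = A * S * Aᵀ - A * S * Cᵀ * (C * S * Cᵀ + V)⁻¹ * C * S * Aᵀ + W) :
    S = A * (S⁻¹ + Cᵀ * V⁻¹ * C)⁻¹ * Aᵀ + W := by
  have hCSC : (C * S * Cᵀ).PosSemidef := by
    simpa using hS.posSemidef.mul_mul_conjTranspose_same C
  have hS' : S⁻¹⁻¹ = S := nonsing_inv_nonsing_inv _ ((isUnit_iff_isUnit_det _).mp hS.isUnit)
  have hV' : V⁻¹⁻¹ = V := nonsing_inv_nonsing_inv _ ((isUnit_iff_isUnit_det _).mp hV.isUnit)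
  have woodbury := add_mul_mul_inv_eq_sub S⁻¹ Cᵀ V⁻¹ C hS.inv.isUnit hV.inv.isUnit
    (by rw [hS', hV']; exact (hV.add_posSemidef hCSC).isUnit)
  rw [woodbury, hS', hV', add_comm V]
  conv_lhs => rw [hric]
  simp only [Matrix.mul_sub, Matrix.sub_mul, Matrix.mul_assoc]

theorem riccati_trace_le {A W S D : Matrix ι ι ℝ} (hS : S.PosDef) {m : ℝ} (hm : 0 < m)
    (hD : m • 1 ≤ D) (hric : S = A * (S⁻¹ + D)⁻¹ * Aᵀ + W) :
    S.trace ≤ W.trace + (Aᵀ * A).trace / m := by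
  have hD₀ : 0 ≤ D := (smul_nonneg hm.le zero_le_one).trans hD
  have hP : (S⁻¹ + D).PosDef := hS.inv.add_posSemidef hD₀.posSemidef
  have hPm : m • 1 ≤ S⁻¹ + D := le_add_of_nonneg_of_le hS.inv.posSemidef.nonneg hD
  calc S.trace = (A * (S⁻¹ + D)⁻¹ * Aᵀ).trace + W.trace := by rw [← trace_add, ← hric]
    _ ≤ (A * (m⁻¹ • 1) * Aᵀ).trace + W.trace := by
      gcongr
      exact trace_mul_mul_transpose_mono A (hP.inv_le_smul_one hm hPm)
    _ = W.trace + (Aᵀ * A).trace / m := by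
      rw [trace_mul_smul_one_mul_transpose]
      ring

theorem le_riccati_trace {A W S D : Matrix ι ι ℝ} (hS : S.PosDef) {l M : ℝ} (hl : 0 < l)
    (hW : l • 1 ≤ W) (hD₀ : 0 ≤ D) (hD : D ≤ M • 1) (hric : S = A * (S⁻¹ + D)⁻¹ * Aᵀ + W) :
    W.trace + (Aᵀ * A).trace * l / (1 + l * M) ≤ S.trace := by
  have hP : (S⁻¹ + D).PosDef := hS.inv.add_posSemidef hD₀.posSemidef
  have hWS : W ≤ S := (le_add_of_nonneg_left (by
    simpa using (hP.inv.posSemidef.mul_mul_conjTranspose_same A).nonneg)).trans_eq hric.symm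
  have hSl : S⁻¹ ≤ l⁻¹ • 1 := hS.inv_le_smul_one hl (hW.trans hWS)
  have hPM : S⁻¹ + D ≤ (l⁻¹ + M) • 1 := by
    rw [add_smul]
    exact add_le_add hSl hD
  have hlM : (l⁻¹ + M)⁻¹ = l / (1 + l * M) := by
    rw [← inv_div, _root_.inv_inj]
    field_simp
  calc W.trace + (Aᵀ * A).trace * l / (1 + l * M)
    _ = (A * ((l⁻¹ + M)⁻¹ • 1) * Aᵀ).trace + W.trace := by
      rw [trace_mul_smul_one_mul_transpose, hlM]
      ring
    _ ≤ (A * (S⁻¹ + D)⁻¹ * Aᵀ).trace + W.trace := by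
      gcongr
      exact trace_mul_mul_transpose_mono A (hP.inv_smul_one_le_inv hPM)
    _ = S.trace := by rw [← trace_add, ← hric]

end Riccati

theorem riccati_trace_bounds_general {n : ℕ}
    (A W S : Matrix (Fin n) (Fin n) ℝ)
    (c σ : Fin n → ℝ) (hc : ∀ i, 0 < c i) (hσ : ∀ i, 0 < σ i)
    (hW : W.PosDef) (hS : S.PosDef)
    (hric : S = A * S * Aᵀ -
        A * S * (Matrix.diagonal c)ᵀ *
          (Matrix.diagonal c * S * (Matrix.diagonal c)ᵀ +
            Matrix.diagonal fun i => σ i ^ 2)⁻¹ *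
          Matrix.diagonal c * S * Aᵀ + W) :
    W.trace + (Aᵀ * A).trace * (⨅ j, hW.1.eigenvalues j) /
        (1 + (⨅ j, hW.1.eigenvalues j) * ⨆ i, c i ^ 2 / σ i ^ 2) ≤ S.trace ∧
      S.trace ≤ W.trace + (Aᵀ * A).trace / ⨅ i, c i ^ 2 / σ i ^ 2 := by
  obtain _ | _ := isEmpty_or_nonempty (Fin n)
  · simp [Matrix.trace]
  have hσ₂ : ∀ i, σ i ^ 2 ≠ 0 := fun i => (pow_pos (hσ i) 2).ne'
  have hric' := riccati_information_form hS (PosDef.diagonal fun i => pow_pos (hσ i) 2) hric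
  rw [transpose_diagonal_mul_inv_diagonal_mul_diagonal c hσ₂] at hric'
  set d : Fin n → ℝ := fun i => c i ^ 2 / σ i ^ 2
  have hd : ∀ i, 0 < d i := fun i => div_pos (pow_pos (hc i) 2) (pow_pos (hσ i) 2)
  obtain ⟨i₀, hi₀⟩ := exists_eq_ciInf_of_finite (f := d)
  obtain ⟨j₀, hj₀⟩ := exists_eq_ciInf_of_finite (f := hW.1.eigenvalues)
  have hm : 0 < ⨅ i, d i := hi₀ ▸ hd i₀
  have hlw : 0 < ⨅ j, hW.1.eigenvalues j := hj₀ ▸ hW.eigenvalues_pos j₀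
  exact ⟨le_riccati_trace hS hlw hW.1.iInf_eigenvalues_smul_one_le
      (PosSemidef.diagonal fun i => (hd i).le).nonneg
      (diagonal_le_smul_one fun i => le_ciSup (Set.finite_range d).bddAbove i) hric',
    riccati_trace_le hS hm (smul_one_le_diagonal fun i => ciInf_le (Set.finite_range d).bddBelow i)
      hric'⟩

/-- Trace bounds on the a priori error covariance `S` of the filtering Riccati
equation: `tr W + tr(AᵀA)·λ_min(W)/(1 + λ_min(W)·M) ≤ tr S ≤ tr W + tr(AᵀA)/m`,
where `m = min_i c_i²/σ_i²` and `M = max_i c_i²/σ_i²`. -/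
theorem riccati_trace_bounds {n : ℕ} (hn : 1 ≤ n)
    (A W S : Matrix (Fin n) (Fin n) ℝ)
    (c σ : Fin n → ℝ) (hc : ∀ i, 0 < c i) (hσ : ∀ i, 0 < σ i)
    (hW : W.PosDef) (hS : S.PosDef)
    (hric : S = A * S * Aᵀ -
        A * S * (Matrix.diagonal c)ᵀ *
          (Matrix.diagonal c * S * (Matrix.diagonal c)ᵀ +
            Matrix.diagonal fun i => σ i ^ 2)⁻¹ *
          Matrix.diagonal c * S * Aᵀ + W) :
    W.trace + (Aᵀ * A).trace * (⨅ j, hW.1.eigenvalues j) /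
        (1 + (⨅ j, hW.1.eigenvalues j) * ⨆ i, c i ^ 2 / σ i ^ 2) ≤ S.trace ∧
      S.trace ≤ W.trace + (Aᵀ * A).trace / ⨅ i, c i ^ 2 / σ i ^ 2 :=
  riccati_trace_bounds_general A W S c σ hc hσ hW hS hric
end

section
/- (Trace bounds on the a posteriori error covariance) Under the stated assumptions, the a posteriori error covariance Σ̄ := (Cᵀ V⁻¹ C + Σ⁻¹)⁻¹ satisfies n/(M + 1/λ_min(W)) ≤ tr(Σ̄) ≤ n/m. -/
/-! Woodbury's identity turns the Riccati equation into `Σ = A Σ̄ Aᵀ + W`, so in the Loewner order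
`λ_min(W) • 1 ≤ W ≤ Σ`, and inversion, which reverses the order, gives
`Σ⁻¹ ≤ λ_min(W)⁻¹ • 1`. Hence `Σ̄⁻¹ = Cᵀ V⁻¹ C + Σ⁻¹` lies between `m • 1` and
`(M + λ_min(W)⁻¹) • 1`; inverting once more and taking traces gives the two bounds. -/

open Matrix
open scoped MatrixOrder

lemma IsSelfAdjoint.units_inv {M : Type*} [Monoid M] [StarMul M] {a : Mˣ}
    (ha : IsSelfAdjoint (a : M)) : IsSelfAdjoint (↑a⁻¹ : M) := by
  rw [IsSelfAdjoint, ← Units.coe_star_inv, show star a = a from Units.ext ha.star_eq]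

section SpectralOrder

variable {A : Type*} [TopologicalSpace A] [Ring A] [StarRing A] [PartialOrder A]
  [StarOrderedRing A] [Algebra ℝ A] [ContinuousFunctionalCalculus ℝ A IsSelfAdjoint]
  [NonnegSpectrumClass ℝ A]

lemma Units.inv_le_algebraMap_inv [StarModule ℝ A] {a : Aˣ} {r : ℝ} (hr : 0 < r)
    (h : algebraMap ℝ A r ≤ a) : (↑a⁻¹ : A) ≤ algebraMap ℝ A r⁻¹ := by
  have ha : IsSelfAdjoint (a : A) := by
    simpa using (IsSelfAdjoint.of_nonneg (sub_nonneg.mpr h)).add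
      ((IsSelfAdjoint.all r).algebraMap A)
  rw [le_algebraMap_iff_spectrum_le ha.units_inv]
  intro x hx
  have hx_inv : r ≤ x⁻¹ :=
    (algebraMap_le_iff_le_spectrum ha).mp h _ (spectrum.inv₀_mem_inv_iff.mp (by rwa [inv_inv]))
  simpa using inv_anti₀ hr hx_inv

lemma Units.algebraMap_inv_le_inv {a : Aˣ} {r : ℝ} (ha : 0 ≤ (a : A))
    (h : (a : A) ≤ algebraMap ℝ A r) : algebraMap ℝ A r⁻¹ ≤ (↑a⁻¹ : A) := by
  have hsa : IsSelfAdjoint (a : A) := IsSelfAdjoint.of_nonneg ha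
  rw [algebraMap_le_iff_le_spectrum hsa.units_inv]
  intro x hx
  have hmem : x⁻¹ ∈ spectrum ℝ (a : A) := spectrum.inv₀_mem_inv_iff.mp (by rwa [inv_inv])
  have hpos : 0 < x⁻¹ := lt_of_le_of_ne (spectrum_nonneg_of_nonneg ha hmem)
    fun h0 => spectrum.zero_notMem ℝ a.isUnit (h0 ▸ hmem)
  simpa using inv_anti₀ hpos ((le_algebraMap_iff_spectrum_le hsa).mp h _ hmem)

end SpectralOrder

namespace Matrix

section Woodbury

variable {m n α : Type*} [Fintype m] [Fintype n] [DecidableEq m] [DecidableEq n] [CommRing α]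

theorem inv_transpose_mul_inv_mul_add_inv {S : Matrix n n α} {C : Matrix m n α}
    {V : Matrix m m α} (hS : IsUnit S) (hV : IsUnit V) (hP : IsUnit (C * S * Cᵀ + V)) :
    (Cᵀ * V⁻¹ * C + S⁻¹)⁻¹ = S - S * Cᵀ * (C * S * Cᵀ + V)⁻¹ * C * S := by
  have hSS : S⁻¹⁻¹ = S := nonsing_inv_nonsing_inv S ((isUnit_iff_isUnit_det S).mp hS)
  have hVV : V⁻¹⁻¹ = V := nonsing_inv_nonsing_inv V ((isUnit_iff_isUnit_det V).mp hV)
  have := add_mul_mul_inv_eq_sub S⁻¹ Cᵀ V⁻¹ C (isUnit_nonsing_inv_iff.mpr hS)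
    (isUnit_nonsing_inv_iff.mpr hV) (by rwa [hSS, hVV, add_comm])
  rwa [hSS, hVV, add_comm V, add_comm S⁻¹] at this

theorem riccati_eq_conj_posterior_add {A W S : Matrix n n α} {C : Matrix m n α}
    {V : Matrix m m α} (hS : IsUnit S) (hV : IsUnit V) (hP : IsUnit (C * S * Cᵀ + V))
    (hric : S = A * S * Aᵀ - A * S * Cᵀ * (C * S * Cᵀ + V)⁻¹ * C * S * Aᵀ + W) :
    S = A * (Cᵀ * V⁻¹ * C + S⁻¹)⁻¹ * Aᵀ + W := by
  rw [inv_transpose_mul_inv_mul_add_inv hS hV hP]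
  conv_lhs => rw [hric]
  simp only [Matrix.mul_sub, Matrix.sub_mul, Matrix.mul_assoc]

end Woodbury

variable {n : Type*} [Fintype n] [DecidableEq n]

lemma diagonal_transpose_mul_inv_diagonal_mul_diagonal {K : Type*} [Field K] (c : n → K)
    {v : n → K} (hv : ∀ i, v i ≠ 0) :
    (diagonal c)ᵀ * (diagonal v)⁻¹ * diagonal c = diagonal fun i => c i ^ 2 / v i := by
  have hinv : (diagonal v)⁻¹ = diagonal fun i => (v i)⁻¹ := by
    refine inv_eq_left_inv ?_
    simp [diagonal_mul_diagonal, inv_mul_cancel₀ (hv _)]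
  rw [diagonal_transpose, hinv, diagonal_mul_diagonal, diagonal_mul_diagonal]
  congr 1
  ext i
  ring

lemma IsHermitian.algebraMap_iInf_eigenvalues_le {𝕜 : Type*} [RCLike 𝕜] {A : Matrix n n 𝕜}
    (hA : A.IsHermitian) : algebraMap ℝ (Matrix n n 𝕜) (⨅ i, hA.eigenvalues i) ≤ A := by
  rw [algebraMap_le_iff_le_spectrum (a := A) hA, hA.spectrum_real_eq_range_eigenvalues]
  rintro _ ⟨i, rfl⟩
  exact ciInf_le (Set.finite_range _).bddBelow i

lemma algebraMap_le_diagonal {d : n → ℝ} {r : ℝ} (h : ∀ i, r ≤ d i) :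
    algebraMap ℝ (Matrix n n ℝ) r ≤ diagonal d := by
  rw [le_iff, algebraMap_eq_diagonal, Pi.algebraMap_def, diagonal_sub]
  exact posSemidef_diagonal_iff.mpr fun i => sub_nonneg.mpr (h i)

lemma diagonal_le_algebraMap {d : n → ℝ} {r : ℝ} (h : ∀ i, d i ≤ r) :
    diagonal d ≤ algebraMap ℝ (Matrix n n ℝ) r := by
  rw [le_iff, algebraMap_eq_diagonal, Pi.algebraMap_def, diagonal_sub]
  exact posSemidef_diagonal_iff.mpr fun i => sub_nonneg.mpr (h i)

namespace PosDef

variable {B : Matrix n n ℝ}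

lemma inv_le_algebraMap_inv (hB : B.PosDef) {r : ℝ} (hr : 0 < r)
    (h : algebraMap ℝ _ r ≤ B) : B⁻¹ ≤ algebraMap ℝ _ r⁻¹ := by
  simpa using Units.inv_le_algebraMap_inv (a := hB.isUnit.unit) hr h

lemma trace_inv_le (hB : B.PosDef) {r : ℝ} (hr : 0 < r)
    (h : algebraMap ℝ _ r ≤ B) : B⁻¹.trace ≤ Fintype.card n / r := by
  simpa [div_eq_mul_inv, algebraMap_eq_diagonal, Pi.algebraMap_def] using
    OrderHomClass.mono (tracePositiveLinearMap n ℝ ℝ) (hB.inv_le_algebraMap_inv hr h)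

lemma le_trace_inv (hB : B.PosDef) {r : ℝ}
    (h : B ≤ algebraMap ℝ _ r) : Fintype.card n / r ≤ B⁻¹.trace := by
  have hle : algebraMap ℝ _ r⁻¹ ≤ B⁻¹ := by
    simpa using Units.algebraMap_inv_le_inv (a := hB.isUnit.unit) hB.posSemidef.nonneg h
  simpa [div_eq_mul_inv, algebraMap_eq_diagonal, Pi.algebraMap_def] using
    OrderHomClass.mono (tracePositiveLinearMap n ℝ ℝ) hle

end PosDef

end Matrix

/-- Trace bounds on the a posteriori error covariance
`S̄ = (Cᵀ V⁻¹ C + S⁻¹)⁻¹`: `n/(M + 1/λ_min(W)) ≤ tr S̄ ≤ n/m`, where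
`m = min_i c_i²/σ_i²` and `M = max_i c_i²/σ_i²`. -/
theorem riccati_posterior_trace_bounds {n : ℕ} (hn : 1 ≤ n)
    (A W S : Matrix (Fin n) (Fin n) ℝ)
    (c σ : Fin n → ℝ) (hc : ∀ i, 0 < c i) (hσ : ∀ i, 0 < σ i)
    (hW : W.PosDef) (hS : S.PosDef)
    (hric : S = A * S * Aᵀ -
        A * S * (Matrix.diagonal c)ᵀ *
          (Matrix.diagonal c * S * (Matrix.diagonal c)ᵀ +
            Matrix.diagonal fun i => σ i ^ 2)⁻¹ *
          Matrix.diagonal c * S * Aᵀ + W) :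
    (n : ℝ) / ((⨆ i, c i ^ 2 / σ i ^ 2) + 1 / ⨅ j, hW.1.eigenvalues j) ≤
        (((Matrix.diagonal c)ᵀ * (Matrix.diagonal fun i => σ i ^ 2)⁻¹ *
          Matrix.diagonal c + S⁻¹)⁻¹).trace ∧
      (((Matrix.diagonal c)ᵀ * (Matrix.diagonal fun i => σ i ^ 2)⁻¹ *
          Matrix.diagonal c + S⁻¹)⁻¹).trace ≤ (n : ℝ) / ⨅ i, c i ^ 2 / σ i ^ 2 := by
  have : Nonempty (Fin n) := ⟨⟨0, hn⟩⟩
  have hV : (diagonal fun i => σ i ^ 2).PosDef := .diagonal fun i => pow_pos (hσ i) 2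
  have hP : (diagonal c * S * (diagonal c)ᵀ + diagonal fun i => σ i ^ 2).PosDef :=
    .posSemidef_add (by simpa using hS.posSemidef.mul_mul_conjTranspose_same (diagonal c)) hV
  have hprec := diagonal_transpose_mul_inv_diagonal_mul_diagonal c fun i => (pow_pos (hσ i) 2).ne'
  rw [hprec]
  set d : Fin n → ℝ := fun i => c i ^ 2 / σ i ^ 2
  have hd : ∀ i, 0 < d i := fun i => div_pos (pow_pos (hc i) 2) (pow_pos (hσ i) 2)
  set B := diagonal d + S⁻¹
  have hB : B.PosDef := (PosDef.diagonal hd).add hS.inv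
  have hWS : W ≤ S := by
    rw [riccati_eq_conj_posterior_add hS.isUnit hV.isUnit hP.isUnit hric, hprec]
    exact le_add_of_nonneg_left
      (by simpa using (hB.inv.posSemidef.mul_mul_conjTranspose_same A).nonneg)
  have hlam : 0 < ⨅ j, hW.1.eigenvalues j := by
    obtain ⟨j, hj⟩ := exists_eq_ciInf_of_finite (f := hW.1.eigenvalues)
    exact hj ▸ hW.eigenvalues_pos j
  have hm : 0 < ⨅ i, d i := by
    obtain ⟨i, hi⟩ := exists_eq_ciInf_of_finite (f := d)
    exact hi ▸ hd i
  have hSinv : S⁻¹ ≤ algebraMap ℝ _ (⨅ j, hW.1.eigenvalues j)⁻¹ :=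
    hS.inv_le_algebraMap_inv hlam (hW.1.algebraMap_iInf_eigenvalues_le.trans hWS)
  have hlow : algebraMap ℝ _ (⨅ i, d i) ≤ B :=
    (algebraMap_le_diagonal fun i => ciInf_le (Set.finite_range d).bddBelow i).trans
      (le_add_of_nonneg_right hS.inv.posSemidef.nonneg)
  have hup : B ≤ algebraMap ℝ _ ((⨆ i, d i) + (⨅ j, hW.1.eigenvalues j)⁻¹) := by
    rw [map_add]
    exact add_le_add
      (diagonal_le_algebraMap fun i => le_ciSup (Set.finite_range d).bddAbove i) hSinv
  exact ⟨by simpa using hB.le_trace_inv hup, by simpa using hB.trace_inv_le hm hlow⟩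
end

section
/- (Entropy lower bound for the a priori covariance) Under the stated assumptions, the positive definite Riccati solution Σ satisfies ln det(Σ) ≥ ln( (det A)² / ( (1/n)·( tr(W⁻¹) + ∑_{i=1}^{n} c_i²/σ_i² )ⁿ ) + det(W) ). -/
/-!
By the Woodbury identity the Riccati equation reads `S = A M⁻¹ Aᵀ + W` with
`M = S⁻¹ + Cᵀ V⁻¹ C`. Superadditivity of the determinant on positive semidefinite matrices gives
`det S ≥ (det A)² / det M + det W`. Since `S ≥ W` in the Loewner order, `S⁻¹ ≤ W⁻¹`, so
`tr M ≤ tr W⁻¹ + ∑ cᵢ²/σᵢ²`, and AM–GM on the eigenvalues of `M` gives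
`det M ≤ (tr M / n)ⁿ ≤ (tr M)ⁿ / n`.
-/

open Matrix Finset

theorem Real.prod_le_sum_div_card_pow {ι : Type*} (s : Finset ι) {f : ι → ℝ}
    (hf : ∀ i ∈ s, 0 ≤ f i) : ∏ i ∈ s, f i ≤ ((∑ i ∈ s, f i) / #s) ^ #s := by
  rcases s.eq_empty_or_nonempty with rfl | hs
  · simp
  have hk : (0 : ℝ) < #s := by exact_mod_cast hs.card_pos
  have amgm := Real.geom_mean_le_arith_mean_weighted s (fun _ ↦ (#s : ℝ)⁻¹) f
    (fun _ _ ↦ by positivity) (by simp [hk.ne']) hf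
  calc ∏ i ∈ s, f i = (∏ i ∈ s, f i ^ (#s : ℝ)⁻¹) ^ #s := by
        rw [← Finset.prod_pow]
        refine Finset.prod_congr rfl fun i hi ↦ ?_
        rw [← Real.rpow_natCast, ← Real.rpow_mul (hf i hi), inv_mul_cancel₀ hk.ne', Real.rpow_one]
    _ ≤ ((∑ i ∈ s, f i) / #s) ^ #s := by
        gcongr
        · exact Finset.prod_nonneg fun i hi ↦ Real.rpow_nonneg (hf i hi) _
        · simpa [← Finset.mul_sum, div_eq_inv_mul] using amgm

namespace Matrix

variable {n : Type*} [Fintype n] [DecidableEq n]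

theorem PosSemidef.det_le_trace_div_card_pow {A : Matrix n n ℝ} (hA : A.PosSemidef) :
    A.det ≤ (A.trace / Fintype.card n) ^ Fintype.card n := by
  rw [hA.isHermitian.det_eq_prod_eigenvalues, hA.isHermitian.trace_eq_sum_eigenvalues]
  simpa using Real.prod_le_sum_div_card_pow univ fun i _ ↦ hA.eigenvalues_nonneg i

theorem IsHermitian.det_one_add {A : Matrix n n ℝ} (hA : A.IsHermitian) :
    (1 + A).det = ∏ i, (1 + hA.eigenvalues i) := by
  have h : 1 + A = cfc (fun x : ℝ ↦ 1 + x) A := by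
    rw [cfc_const_add _ _ A, cfc_id' ℝ A]
    simp
  rw [h, hA.cfc_eq]
  simp [IsHermitian.cfc, -Unitary.conjStarAlgAut_apply]

theorem PosSemidef.one_add_det_le_det_one_add [Nonempty n] {A : Matrix n n ℝ}
    (hA : A.PosSemidef) : 1 + A.det ≤ (1 + A).det := by
  rw [hA.isHermitian.det_one_add, hA.isHermitian.det_eq_prod_eigenvalues]
  have hev := hA.eigenvalues_nonneg
  simpa using Finset.prod_add_prod_le (mem_univ (Classical.arbitrary n)) le_rfl
    (fun j _ _ ↦ le_add_of_nonneg_right (hev j)) (fun j _ _ ↦ le_add_of_nonneg_left zero_le_one)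
    (fun _ _ ↦ zero_le_one) (fun j _ ↦ hev j)

open scoped MatrixOrder in
theorem PosSemidef.det_add_det_le_det_add [Nonempty n] {A B : Matrix n n ℝ}
    (hA : A.PosSemidef) (hB : B.PosDef) : A.det + B.det ≤ (A + B).det := by
  -- with `R = √B` and `Z = R⁻¹ A R⁻¹`, this is `1 + det Z ≤ det (1 + Z)` scaled by `det B`
  set R := CFC.sqrt B
  have hR : R.PosSemidef := nonneg_iff_posSemidef.mp (CFC.sqrt_nonneg B)
  have hRR : R * R = B := CFC.sqrt_mul_sqrt_self B (nonneg_iff_posSemidef.mpr hB.posSemidef)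
  have hRu : IsUnit R.det := by
    rw [← isUnit_iff_isUnit_det, ← isUnit_mul_self_iff, hRR]
    exact hB.isUnit
  set Z := R⁻¹ * A * R⁻¹
  have hZ : Z.PosSemidef := by
    simpa only [hR.isHermitian.inv.eq] using hA.conjTranspose_mul_mul_same R⁻¹
  have hA' : A = R * Z * R := by
    simp only [Z, ← mul_assoc, mul_nonsing_inv _ hRu, one_mul]
    rw [mul_assoc, nonsing_inv_mul _ hRu, mul_one]
  have hsum : A + B = R * (1 + Z) * R := by
    rw [hA', ← hRR]
    noncomm_ring
  calc A.det + B.det = R.det * R.det * (1 + Z.det) := by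
        rw [hA', ← hRR]
        simp only [det_mul]
        ring
    _ ≤ R.det * R.det * (1 + Z).det := by
        gcongr
        · exact mul_self_nonneg _
        · exact hZ.one_add_det_le_det_one_add
    _ = (A + B).det := by
        rw [hsum]
        simp only [det_mul]
        ring

theorem PosDef.posSemidef_inv_sub_inv_s9 {K : Type*} [Field K] [PartialOrder K] [StarRing K]
    [StarOrderedRing K] {A B : Matrix n n K} (hA : A.PosDef) (hB : B.PosDef)
    (hAB : (B - A).PosSemidef) : (A⁻¹ - B⁻¹).PosSemidef := by
  -- both matrices are Schur complements in the block matrix `[[B, 1], [1, A⁻¹]]`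
  have := hA.isUnit.invertible
  have := hB.isUnit.invertible
  have := hA.inv.isUnit.invertible
  have hblock := (PosDef.fromBlocks₂₂ B 1 hA.inv).mpr (by simpa [hA.isUnit] using hAB)
  simpa using (PosDef.fromBlocks₁₁ 1 A⁻¹ hB).mp (by simpa using hblock)

theorem sub_mul_inv_add_mul_eq_inv_add {α : Type*} [CommRing α] {k : Type*} [Fintype k]
    [DecidableEq k] {P : Matrix n n α} {R : Matrix k k α} (U : Matrix n k α) (H : Matrix k n α)
    (hP : IsUnit P) (hR : IsUnit R) (hG : IsUnit (H * P * U + R)) :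
    P - P * U * (H * P * U + R)⁻¹ * H * P = (P⁻¹ + U * R⁻¹ * H)⁻¹ := by
  have hPP : P⁻¹⁻¹ = P := nonsing_inv_nonsing_inv P ((isUnit_iff_isUnit_det P).mp hP)
  have hRR : R⁻¹⁻¹ = R := nonsing_inv_nonsing_inv R ((isUnit_iff_isUnit_det R).mp hR)
  have hG' : IsUnit (R⁻¹⁻¹ + H * P⁻¹⁻¹ * U) := by rwa [hPP, hRR, add_comm]
  rw [add_mul_mul_inv_eq_sub _ _ _ _ (isUnit_nonsing_inv_iff.mpr hP)
    (isUnit_nonsing_inv_iff.mpr hR) hG', hPP, hRR, add_comm R]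

theorem det_le_of_riccati [Nonempty n] {A W S D : Matrix n n ℝ} (hW : W.PosDef)
    (hS : S.PosDef) (hD : D.PosSemidef) (hric : S = A * (S⁻¹ + D)⁻¹ * Aᵀ + W) :
    A.det ^ 2 / (((W⁻¹).trace + D.trace) / Fintype.card n) ^ Fintype.card n + W.det ≤ S.det := by
  set M := S⁻¹ + D
  have hM : M.PosDef := hS.inv.add_posSemidef hD
  have hK : (A * M⁻¹ * Aᵀ).PosSemidef := by
    simpa only [conjTranspose_eq_transpose_of_trivial] using
      hM.inv.posSemidef.mul_mul_conjTranspose_same A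
  have hSW : S - W = A * M⁻¹ * Aᵀ := by
    conv_lhs => rw [hric]
    abel
  have htrace : M.trace ≤ (W⁻¹).trace + D.trace := by
    have := (hW.posSemidef_inv_sub_inv_s9 hS (hSW ▸ hK)).trace_nonneg
    rw [trace_sub] at this
    rw [trace_add]
    linarith
  have hdetM : M.det ≤ (((W⁻¹).trace + D.trace) / Fintype.card n) ^ Fintype.card n :=
    hM.posSemidef.det_le_trace_div_card_pow.trans <|
      pow_le_pow_left₀ (by have := hM.posSemidef.trace_nonneg; positivity) (by gcongr) _
  have hdetK : (A * M⁻¹ * Aᵀ).det = A.det ^ 2 / M.det := by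
    rw [det_mul, det_mul, det_nonsing_inv, det_transpose, Ring.inverse_eq_inv']
    ring
  calc A.det ^ 2 / (((W⁻¹).trace + D.trace) / Fintype.card n) ^ Fintype.card n + W.det
      ≤ A.det ^ 2 / M.det + W.det := by
        gcongr
        exact hM.det_pos
    _ ≤ S.det := by
        rw [← hdetK]
        conv_rhs => rw [hric]
        exact hK.det_add_det_le_det_add hW

theorem diagonal_transpose_mul_inv_mul_diagonal {K : Type*} [Field K] (c r : n → K)
    (hr : ∀ i, r i ≠ 0) :
    (diagonal c)ᵀ * (diagonal r)⁻¹ * diagonal c = diagonal fun i ↦ c i ^ 2 / r i := by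
  have hinv : (diagonal r)⁻¹ = diagonal fun i ↦ (r i)⁻¹ := by
    refine inv_eq_right_inv ?_
    rw [diagonal_mul_diagonal, ← diagonal_one]
    exact congrArg diagonal (funext fun i ↦ mul_inv_cancel₀ (hr i))
  rw [hinv, diagonal_transpose, diagonal_mul_diagonal, diagonal_mul_diagonal]
  exact congrArg diagonal (funext fun i ↦ by ring)

end Matrix

theorem riccati_logdet_lower_general {n : ℕ} (hn : 1 ≤ n)
    (A W S : Matrix (Fin n) (Fin n) ℝ)
    (c σ : Fin n → ℝ) (hσ : ∀ i, 0 < σ i)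
    (hW : W.PosDef) (hS : S.PosDef)
    (hric : S = A * S * Aᵀ -
        A * S * (Matrix.diagonal c)ᵀ *
          (Matrix.diagonal c * S * (Matrix.diagonal c)ᵀ +
            Matrix.diagonal fun i => σ i ^ 2)⁻¹ *
          Matrix.diagonal c * S * Aᵀ + W) :
    Real.log ((A.det) ^ 2 /
        ((1 / (n : ℝ)) * ((W⁻¹).trace + ∑ i, c i ^ 2 / σ i ^ 2) ^ n) + W.det) ≤
      Real.log S.det := by
  have : Nonempty (Fin n) := ⟨⟨0, hn⟩⟩
  set V : Matrix (Fin n) (Fin n) ℝ := diagonal fun i ↦ σ i ^ 2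
  have hV : V.PosDef := PosDef.diagonal fun i ↦ pow_pos (hσ i) 2
  have hG : (diagonal c * S * (diagonal c)ᵀ + V).PosDef := by
    refine PosDef.posSemidef_add ?_ hV
    simpa only [conjTranspose_eq_transpose_of_trivial] using
      hS.posSemidef.mul_mul_conjTranspose_same (diagonal c)
  have hinfo : S = A * (S⁻¹ + diagonal fun i ↦ c i ^ 2 / σ i ^ 2)⁻¹ * Aᵀ + W := by
    rw [← diagonal_transpose_mul_inv_mul_diagonal c _ fun i ↦ (pow_pos (hσ i) 2).ne',
      ← sub_mul_inv_add_mul_eq_inv_add _ _ hS.isUnit hV.isUnit hG.isUnit]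
    conv_lhs => rw [hric]
    noncomm_ring
  have hD : (diagonal fun i ↦ c i ^ 2 / σ i ^ 2).PosSemidef :=
    PosSemidef.diagonal fun i ↦ by positivity
  have hbound := det_le_of_riccati hW hS hD hinfo
  simp only [trace_diagonal, Fintype.card_fin] at hbound
  set t := (W⁻¹).trace + ∑ i, c i ^ 2 / σ i ^ 2
  have ht : 0 < t := add_pos_of_pos_of_nonneg hW.inv.trace_pos (sum_nonneg fun i _ ↦ by positivity)
  have hn' : (0 : ℝ) < n := by exact_mod_cast hn
  have hpow : (t / n) ^ n ≤ 1 / n * t ^ n := by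
    rw [div_pow, one_div, inv_mul_eq_div]
    exact div_le_div_of_nonneg_left (by positivity) hn'
      (by exact_mod_cast Nat.le_self_pow (by omega) n)
  have hWdet := hW.det_pos
  refine Real.log_le_log (by positivity) (hbound.trans' ?_)
  gcongr

/-- Entropy lower bound for the a priori covariance:
`ln det S ≥ ln( (det A)² / ((1/n)(tr W⁻¹ + ∑ᵢ cᵢ²/σᵢ²)ⁿ) + det W )`. -/
theorem riccati_logdet_lower {n : ℕ} (hn : 1 ≤ n)
    (A W S : Matrix (Fin n) (Fin n) ℝ)
    (c σ : Fin n → ℝ) (hc : ∀ i, 0 < c i) (hσ : ∀ i, 0 < σ i)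
    (hW : W.PosDef) (hS : S.PosDef)
    (hric : S = A * S * Aᵀ -
        A * S * (Matrix.diagonal c)ᵀ *
          (Matrix.diagonal c * S * (Matrix.diagonal c)ᵀ +
            Matrix.diagonal fun i => σ i ^ 2)⁻¹ *
          Matrix.diagonal c * S * Aᵀ + W) :
    Real.log ((A.det) ^ 2 /
        ((1 / (n : ℝ)) * ((W⁻¹).trace + ∑ i, c i ^ 2 / σ i ^ 2) ^ n) + W.det) ≤
      Real.log S.det :=
  riccati_logdet_lower_general hn A W S c σ hσ hW hS hric
end

section
/- (Privacy calibration for a cost bound) In addition to the stated filtering assumptions, suppose all coordinates use a common privacy parameter ε > 0, common sensitivity Δ > 0, and common K_δ ∈ [1, 4.5], and set σ_i = σ := (Δ/(2ε))·(K_δ + √(K_δ² + 2ε)) for every i, so V = σ²·I and W̄ := σ²·I. Let B ∈ ℝ^{n×m}, let Q ∈ ℝ^{n×n} and R ∈ ℝ^{m×m} be symmetric positive definite, let K ∈ ℝ^{n×n} be symmetric positive semidefinite with K ⪰ Q, and let x̄, g ∈ ℝⁿ and H ∈ ℝ^{m×n}. Let α be a real number with α − λ_max(K)·tr(W) − x̄ᵀQx̄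 + gᵀB(R + BᵀKB)⁻¹Bᵀg > 0, and define for each i: η₅ᵢ := √( ( α − λ_max(K)·tr(W) − x̄ᵀQx̄ + gᵀB(R + BᵀKB)⁻¹Bᵀg ) / ( Δ²·( λ_max(K)·tr(AᵀA)/c_i² + tr(Hᵀ R H) + tr(Q) ) ) ). If ε ≥ (1/8)·((1 + √(36η₅ᵢ + 1))/η₅ᵢ)² for every i, then the total cost satisfies J̃ := tr(KΣ + (Q − K)Σ̄) + x̄ᵀQx̄ − gᵀB(R + BᵀKB)⁻¹Bᵀg + tr(Q W̄) + tr(Hᵀ R H W̄) ≤ α, where Σ̄ := (Cᵀ V⁻¹ C + Σ⁻¹)⁻¹. -/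
/-!
Write `Σ̄ = (Cᵀ V⁻¹ C + Σ⁻¹)⁻¹` and `λ = λ_max(K)`. By the Woodbury identity the Riccati equation
reads `Σ = A Σ̄ Aᵀ + W`, so the Loewner bounds `Q ⪯ K ⪯ λ I` give
`tr(KΣ + (Q - K)Σ̄) ≤ λ tr W + λ tr(Σ̄ AᵀA)`. For the index `i₀` minimising `c_i`,
`Σ̄⁻¹ ⪰ σ⁻² C² ⪰ (c_{i₀}/σ)² I`, so `Σ̄ ⪯ (σ/c_{i₀})² I` and `J̃ ≤ α - (Δ η)² d + σ² d`, where
`η = η₅ᵢ₀` and `d` is the denominator under its root. It remains to see `σ ≤ Δ η`: the positive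
root `s` of `η x² - x - 9` satisfies `s ≤ √(2ε)` by the choice of `ε`, hence
`2εη ≥ 9 + √(2ε) ≥ K_δ + √(K_δ² + 2ε)`.
-/

open Matrix
open scoped ComplexOrder MatrixOrder

namespace Matrix

theorem PosDef.mul_mul_transpose_add {n p : Type*} [Fintype n] [Fintype p] {S : Matrix n n ℝ}
    {V : Matrix p p ℝ} (hS : S.PosDef) (C : Matrix p n ℝ) (hV : V.PosDef) :
    (C * S * Cᵀ + V).PosDef :=
  PosDef.posSemidef_add (hS.posSemidef.mul_mul_conjTranspose_same C) hV

variable {n : Type*} [Fintype n] [DecidableEq n]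

theorem inv_smul_one {𝕜 : Type*} [Field 𝕜] {μ : 𝕜} (hμ : μ ≠ 0) :
    (μ • (1 : Matrix n n 𝕜))⁻¹ = μ⁻¹ • 1 :=
  inv_eq_left_inv <| by rw [smul_mul_smul_comm, inv_mul_cancel₀ hμ, Matrix.mul_one, one_smul]

section LoewnerOrder

variable {𝕜 : Type*} [RCLike 𝕜]

theorem IsHermitian.le_smul_one_iSup_eigenvalues {A : Matrix n n 𝕜} (hA : A.IsHermitian) :
    A ≤ (⨆ j, hA.eigenvalues j) • (1 : Matrix n n 𝕜) := by
  rw [← Algebra.algebraMap_eq_smul_one]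
  refine le_algebraMap_of_spectrum_le (fun x hx ↦ ?_) hA.isSelfAdjoint
  obtain ⟨j, rfl⟩ := hA.spectrum_real_eq_range_eigenvalues ▸ hx
  exact le_ciSup (Set.finite_range _).bddAbove j

theorem trace_mul_le_trace_mul_of_le {P P' X : Matrix n n 𝕜} (hP : P ≤ P') (hX : 0 ≤ X) :
    (P * X).trace ≤ (P' * X).trace := by
  obtain ⟨B, rfl⟩ := CStarAlgebra.nonneg_iff_eq_star_mul_self.mp hX
  rw [← Matrix.mul_assoc, trace_mul_comm, ← Matrix.mul_assoc, ← Matrix.mul_assoc P',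
    trace_mul_comm (P' * star B), ← Matrix.mul_assoc]
  exact (tracePositiveLinearMap n ℝ 𝕜).monotone (star_right_conjugate_le_conjugate hP B)

theorem inv_le_inv_of_le {M N : Matrix n n 𝕜} (hN : N.PosDef) (hNM : N ≤ M) : M⁻¹ ≤ N⁻¹ := by
  set D := M - N
  have hD : D.PosSemidef := hNM
  have hM : M.PosDef := by simpa [D] using hN.posSemidef_add hD
  have hMM : M * M⁻¹ = 1 := M.mul_nonsing_inv hM.det_pos.ne'.isUnit
  have hMM' : M⁻¹ * M = 1 := M.nonsing_inv_mul hM.det_pos.ne'.isUnit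
  have hNN : N * N⁻¹ = 1 := N.mul_nonsing_inv hN.det_pos.ne'.isUnit
  have hNN' : N⁻¹ * N = 1 := N.nonsing_inv_mul hN.det_pos.ne'.isUnit
  have key : N⁻¹ - M⁻¹ = M⁻¹ * (D + D * N⁻¹ * D) * M⁻¹ := by
    simp only [D, Matrix.mul_sub, Matrix.sub_mul, Matrix.mul_add, Matrix.add_mul,
      Matrix.mul_assoc, hMM, hNN, hNN', Matrix.mul_one]
    simp only [← Matrix.mul_assoc, hMM', Matrix.one_mul]
    abel
  have hX : (D + D * N⁻¹ * D).PosSemidef := by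
    have := hN.inv.posSemidef.conjTranspose_mul_mul_same D
    rw [hD.isHermitian.eq] at this
    exact hD.add this
  rw [le_iff, key]
  simpa [hM.inv.isHermitian.eq] using hX.mul_mul_conjTranspose_same M⁻¹

end LoewnerOrder

noncomputable def posteriorCov {α p : Type*} [CommRing α] [Fintype p] [DecidableEq p]
    (S : Matrix n n α) (C : Matrix p n α) (V : Matrix p p α) : Matrix n n α :=
  (Cᵀ * V⁻¹ * C + S⁻¹)⁻¹

theorem riccati_eq_posteriorCov {α p : Type*} [CommRing α] [Fintype p] [DecidableEq p]
    (A W S : Matrix n n α) (C : Matrix p n α) (V : Matrix p p α)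
    (hS : IsUnit S) (hV : IsUnit V) (hG : IsUnit (C * S * Cᵀ + V)) :
    A * S * Aᵀ - A * S * Cᵀ * (C * S * Cᵀ + V)⁻¹ * C * S * Aᵀ + W =
      A * posteriorCov S C V * Aᵀ + W := by
  have hS' := nonsing_inv_nonsing_inv S ((isUnit_iff_isUnit_det S).mp hS)
  have hV' := nonsing_inv_nonsing_inv V ((isUnit_iff_isUnit_det V).mp hV)
  have hwoodbury := add_mul_mul_inv_eq_sub S⁻¹ Cᵀ V⁻¹ C (isUnit_nonsing_inv_iff.mpr hS)
    (isUnit_nonsing_inv_iff.mpr hV) (by rwa [hS', hV', add_comm])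
  rw [hS', hV', add_comm V] at hwoodbury
  rw [posteriorCov, add_comm _ S⁻¹, hwoodbury]
  simp only [Matrix.mul_sub, Matrix.sub_mul, Matrix.mul_assoc]

theorem posteriorCov_posDef {p : Type*} [Fintype p] [DecidableEq p] {S : Matrix n n ℝ}
    {V : Matrix p p ℝ} (hS : S.PosDef) (C : Matrix p n ℝ) (hV : V.PosDef) :
    (posteriorCov S C V).PosDef :=
  (PosDef.posSemidef_add (hV.inv.posSemidef.conjTranspose_mul_mul_same C) hS.inv).inv

theorem posteriorCov_le_smul_one {S : Matrix n n ℝ} (hS : S.PosDef) {c : n → ℝ} {σ c₀ : ℝ}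
    (hσ : σ ≠ 0) (hc₀ : 0 < c₀) (hc : ∀ j, c₀ ≤ c j) :
    posteriorCov S (diagonal c) (σ ^ 2 • 1) ≤ (σ ^ 2 / c₀ ^ 2) • 1 := by
  have hCVC : (diagonal c)ᵀ * (σ ^ 2 • 1 : Matrix n n ℝ)⁻¹ * diagonal c =
      diagonal fun j ↦ c j ^ 2 / σ ^ 2 := by
    rw [inv_smul_one (by positivity), diagonal_transpose, smul_one_eq_diagonal,
      diagonal_mul_diagonal, diagonal_mul_diagonal]
    congr 1; ext j; ring
  have hle : (c₀ ^ 2 / σ ^ 2) • 1 ≤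
      (diagonal c)ᵀ * (σ ^ 2 • 1 : Matrix n n ℝ)⁻¹ * diagonal c + S⁻¹ :=
    calc (c₀ ^ 2 / σ ^ 2) • (1 : Matrix n n ℝ)
        ≤ diagonal fun j ↦ c j ^ 2 / σ ^ 2 := by
          rw [le_iff, smul_one_eq_diagonal, diagonal_sub, posSemidef_diagonal_iff]
          intro j
          have := pow_le_pow_left₀ hc₀.le (hc j) 2
          simp only [sub_nonneg]
          gcongr
      _ = _ := hCVC.symm
      _ ≤ _ + S⁻¹ := le_add_of_nonneg_right hS.inv.posSemidef.nonneg
  have hμ : ((c₀ ^ 2 / σ ^ 2) • 1 : Matrix n n ℝ).PosDef := PosDef.one.smul (by positivity)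
  simpa only [posteriorCov, inv_smul_one (by positivity : c₀ ^ 2 / σ ^ 2 ≠ 0), inv_div] using
    inv_le_inv_of_le hμ hle

theorem trace_mul_add_sub_mul_le {A S Sbar W K Q : Matrix n n ℝ} {L b : ℝ} (hL : 0 ≤ L)
    (hS : S = A * Sbar * Aᵀ + W) (hSbar : 0 ≤ Sbar) (hSbar_le : Sbar ≤ b • 1) (hW : 0 ≤ W)
    (hKL : K ≤ L • 1) (hQK : Q ≤ K) :
    (K * S + (Q - K) * Sbar).trace ≤ L * W.trace + L * b * (Aᵀ * A).trace := by
  have hASA : 0 ≤ A * Sbar * Aᵀ :=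
    ((nonneg_iff_posSemidef.mp hSbar).mul_mul_conjTranspose_same A).nonneg
  have hAA : 0 ≤ Aᵀ * A := (posSemidef_conjTranspose_mul_self A).nonneg
  have h1 : (K * (A * Sbar * Aᵀ)).trace ≤ L * (A * Sbar * Aᵀ).trace := by
    simpa using trace_mul_le_trace_mul_of_le hKL hASA
  have h2 : (A * Sbar * Aᵀ).trace ≤ b * (Aᵀ * A).trace := by
    rw [trace_mul_cycle, trace_mul_comm]
    simpa using trace_mul_le_trace_mul_of_le hSbar_le hAA
  have h3 : (K * W).trace ≤ L * W.trace := by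
    simpa using trace_mul_le_trace_mul_of_le hKL hW
  have h4 : ((Q - K) * Sbar).trace ≤ 0 := by
    simpa using trace_mul_le_trace_mul_of_le (sub_nonpos.mpr hQK) hSbar
  rw [hS, Matrix.mul_add, trace_add, trace_add]
  nlinarith

end Matrix

theorem noise_scale_le_of_calibration {Δ ε Kδ η : ℝ} (hΔ : 0 ≤ Δ) (hε : 0 < ε) (hKδ₀ : 0 ≤ Kδ)
    (hKδ : Kδ ≤ 4.5) (hη : 0 < η) (hcal : 1 / 8 * ((1 + √(36 * η + 1)) / η) ^ 2 ≤ ε) :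
    Δ / (2 * ε) * (Kδ + √(Kδ ^ 2 + 2 * ε)) ≤ Δ * η := by
  set u := √(36 * η + 1)
  have hu : u ^ 2 = 36 * η + 1 := Real.sq_sqrt (by positivity)
  set t := √(2 * ε)
  have ht : t ^ 2 = 2 * ε := Real.sq_sqrt (by positivity)
  set s := (1 + u) / (2 * η)
  have hs_root : η * s ^ 2 - s - 9 = 0 := by
    simp only [s]; field_simp; nlinarith [hu]
  have hs_le : s ≤ t := Real.le_sqrt_of_sq_le <| by
    have : s ^ 2 = 1 / 4 * ((1 + u) / η) ^ 2 := by simp only [s]; field_simp; ring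
    linarith
  have hηs : 1 ≤ η * s := by
    have : η * s = (1 + u) / 2 := by simp only [s]; field_simp
    rw [this]; nlinarith [Real.sqrt_nonneg (36 * η + 1)]
  -- `η t² - t - 9 = (t - s) (η (t + s) - 1)` because `s` is a root
  have ht_root : 9 + t ≤ η * (2 * ε) := by
    nlinarith [mul_nonneg (sub_nonneg.mpr hs_le) (by nlinarith : 0 ≤ η * (t + s) - 1)]
  have hsqrt : √(Kδ ^ 2 + 2 * ε) ≤ Kδ + t :=
    Real.sqrt_le_iff.mpr ⟨by positivity, by nlinarith [Real.sqrt_nonneg (2 * ε)]⟩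
  rw [div_mul_eq_mul_div, div_le_iff₀ (by positivity)]
  nlinarith

theorem sq_mul_le_of_le_mul_sqrt {σ Δ N d : ℝ} (hσ : 0 ≤ σ) (hΔ : 0 < Δ) (hd : 0 < d)
    (hN : 0 ≤ N) (h : σ ≤ Δ * √(N / (Δ ^ 2 * d))) : σ ^ 2 * d ≤ N := by
  have h2 : σ ^ 2 ≤ Δ ^ 2 * (N / (Δ ^ 2 * d)) := by
    simpa [mul_pow, Real.sq_sqrt (by positivity : 0 ≤ N / (Δ ^ 2 * d))] using
      pow_le_pow_left₀ hσ h 2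
  rwa [mul_div_assoc', mul_div_mul_left _ _ (by positivity), le_div_iff₀ hd] at h2

/-- Privacy calibration for a cost bound: with common privacy parameters and
`ε ≥ (1/8)((1+√(36η₅ᵢ+1))/η₅ᵢ)²` for every coordinate `i`, the total private
LQG cost `J̃` is at most `α`. -/
theorem privacy_calibration_cost {n m : ℕ} (hn : 1 ≤ n)
    (A W S : Matrix (Fin n) (Fin n) ℝ)
    (c : Fin n → ℝ) (hc : ∀ i, 0 < c i)
    (Δ ε Kδ σc : ℝ) (hΔ : 0 < Δ) (hε : 0 < ε) (hKδ1 : 1 ≤ Kδ) (hKδ2 : Kδ ≤ 4.5)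
    (hσc : σc = Δ / (2 * ε) * (Kδ + Real.sqrt (Kδ ^ 2 + 2 * ε)))
    (hW : W.PosDef) (hS : S.PosDef)
    (hric : S = A * S * Aᵀ -
        A * S * (Matrix.diagonal c)ᵀ *
          (Matrix.diagonal c * S * (Matrix.diagonal c)ᵀ +
            σc ^ 2 • (1 : Matrix (Fin n) (Fin n) ℝ))⁻¹ *
          Matrix.diagonal c * S * Aᵀ + W)
    (B : Matrix (Fin n) (Fin m) ℝ) (Q : Matrix (Fin n) (Fin n) ℝ)
    (R : Matrix (Fin m) (Fin m) ℝ) (hQ : Q.PosDef) (hR : R.PosDef)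
    (K : Matrix (Fin n) (Fin n) ℝ) (hK : K.PosSemidef) (hKQ : (K - Q).PosSemidef)
    (xb g : Fin n → ℝ) (H : Matrix (Fin m) (Fin n) ℝ) (α : ℝ)
    (hα : 0 < α - (⨆ j, hK.1.eigenvalues j) * W.trace - xb ⬝ᵥ (Q *ᵥ xb) +
        g ⬝ᵥ ((B * (R + Bᵀ * K * B)⁻¹ * Bᵀ) *ᵥ g))
    (hcal : ∀ i,
      (1 / 8) * ((1 + Real.sqrt (36 * Real.sqrt
            ((α - (⨆ j, hK.1.eigenvalues j) * W.trace - xb ⬝ᵥ (Q *ᵥ xb) +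
              g ⬝ᵥ ((B * (R + Bᵀ * K * B)⁻¹ * Bᵀ) *ᵥ g)) /
            (Δ ^ 2 * ((⨆ j, hK.1.eigenvalues j) * (Aᵀ * A).trace / c i ^ 2 +
              (Hᵀ * R * H).trace + Q.trace))) + 1)) /
          Real.sqrt
            ((α - (⨆ j, hK.1.eigenvalues j) * W.trace - xb ⬝ᵥ (Q *ᵥ xb) +
              g ⬝ᵥ ((B * (R + Bᵀ * K * B)⁻¹ * Bᵀ) *ᵥ g)) /
            (Δ ^ 2 * ((⨆ j, hK.1.eigenvalues j) * (Aᵀ * A).trace / c i ^ 2 +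
              (Hᵀ * R * H).trace + Q.trace)))) ^ 2 ≤ ε) :
    (K * S + (Q - K) *
        (((Matrix.diagonal c)ᵀ * (σc ^ 2 • (1 : Matrix (Fin n) (Fin n) ℝ))⁻¹ *
          Matrix.diagonal c + S⁻¹)⁻¹)).trace +
      xb ⬝ᵥ (Q *ᵥ xb) - g ⬝ᵥ ((B * (R + Bᵀ * K * B)⁻¹ * Bᵀ) *ᵥ g) +
      (Q * (σc ^ 2 • (1 : Matrix (Fin n) (Fin n) ℝ))).trace +
      (Hᵀ * R * H * (σc ^ 2 • (1 : Matrix (Fin n) (Fin n) ℝ))).trace ≤ α := by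
  have : Nonempty (Fin n) := ⟨⟨0, hn⟩⟩
  obtain ⟨i₀, hi₀⟩ := Finite.exists_min c
  set L := ⨆ j, hK.1.eigenvalues j
  have hL : 0 ≤ L := (hK.eigenvalues_nonneg i₀).trans (le_ciSup (Set.finite_range _).bddAbove i₀)
  have hσ : 0 < σc := hσc ▸ mul_pos (by positivity)
    (add_pos_of_pos_of_nonneg (by linarith) (Real.sqrt_nonneg _))
  have hV : (σc ^ 2 • 1 : Matrix (Fin n) (Fin n) ℝ).PosDef := PosDef.one.smul (by positivity)
  have hS_post : S = A * posteriorCov S (diagonal c) (σc ^ 2 • 1) * Aᵀ + W :=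
    hric.trans <| riccati_eq_posteriorCov _ _ _ _ _ hS.isUnit hV.isUnit
      (hS.mul_mul_transpose_add _ hV).isUnit
  have hcost := trace_mul_add_sub_mul_le hL hS_post
    (posteriorCov_posDef hS _ hV).posSemidef.nonneg (posteriorCov_le_smul_one hS hσ.ne' (hc i₀) hi₀)
    hW.posSemidef.nonneg hK.1.le_smul_one_iSup_eigenvalues (le_iff.mpr hKQ)
  set N := α - L * W.trace - xb ⬝ᵥ (Q *ᵥ xb) + g ⬝ᵥ ((B * (R + Bᵀ * K * B)⁻¹ * Bᵀ) *ᵥ g)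
  set d := L * (Aᵀ * A).trace / c i₀ ^ 2 + (Hᵀ * R * H).trace + Q.trace
  have hd : 0 < d := by
    have hAA : 0 ≤ (Aᵀ * A).trace := (posSemidef_conjTranspose_mul_self A).trace_nonneg
    have hHRH : 0 ≤ (Hᵀ * R * H).trace := (hR.posSemidef.conjTranspose_mul_mul_same H).trace_nonneg
    have hQtr := hQ.trace_pos
    positivity
  have hnoise : σc ^ 2 * d ≤ N := sq_mul_le_of_le_mul_sqrt hσ.le hΔ hd hα.le <|
    hσc ▸ noise_scale_le_of_calibration hΔ.le hε (by linarith) hKδ2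
      (Real.sqrt_pos.mpr (by positivity)) (hcal i₀)
  have hd_split : σc ^ 2 * d = L * (σc ^ 2 / c i₀ ^ 2) * (Aᵀ * A).trace +
      σc ^ 2 * (Hᵀ * R * H).trace + σc ^ 2 * Q.trace := by
    ring
  simp only [posteriorCov] at hcost
  simp only [Matrix.mul_smul, Matrix.mul_one, trace_smul, smul_eq_mul]
  linarith
end

section
/- (Derivative identity for the a priori covariance) Let A, C, W be real n×n matrices with W symmetric positive definite, and let σ₀ > 0. Suppose Σ : ℝ → ℝ^{n×n} is differentiable at σ₀, takes symmetric positive definite values, and satisfies, for all s in a neighborhood of σ₀, the parameterized Riccati equation Σ(s) = A Σ(s) Aᵀ − A Σ(s) Cᵀ (C Σ(s) Cᵀ + s²·I)⁻¹ C Σ(s) Aᵀ + W. Writing V := σ₀²·I, Σ := Σ(σ₀), P := Cᵀ(C Σ Cᵀ + V)⁻¹ C Σ Aᵀ, F := (C Σ Cᵀ + V)⁻¹ C Σ Aᵀ, and U := (Aᵀ − P)(A − Pᵀ) − I, the derivative Σ'(σ₀) satisfies tr( U · Σ'(σ₀) ) = −2σ₀ · tr( Fᵀ F ). -/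
open Matrix

/-!
Differentiating the fixed-point equation `Σ(s) = R(s, Σ(s))` of the Riccati map at `σ₀`, with
`F` and `P = Cᵀ F` as in the statement, gives the Stein equation
`Σ' = (A - Pᵀ) Σ' (A - Pᵀ)ᵀ + 2σ₀ FᵀF`: the terms of `dR` that contain `Σ'` assemble into the
closed-loop conjugation once the symmetry of `Σ` and of `C Σ Cᵀ + σ₀² I` is used, and the
derivative `2σ₀ I` of the noise covariance contributes `Fᵀ (2σ₀ I) F`. Taking traces and cycling
`tr((A - Pᵀ) Σ' (A - Pᵀ)ᵀ) = tr((Aᵀ - P)(A - Pᵀ) Σ')` gives the identity. Positivity of `Σ` and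
`σ₀ > 0` make `C Σ Cᵀ + σ₀² I` invertible, so that its inverse is differentiable.
-/

theorem Matrix.trace_mul_transpose_sub_one_mul_of_eq {n R : Type*} [Fintype n] [DecidableEq n]
    [CommRing R] {X L Q : Matrix n n R} (h : X = Lᵀ * X * L + Q) :
    ((L * Lᵀ - 1) * X).trace = -Q.trace := by
  have htrace : X.trace = (L * Lᵀ * X).trace + Q.trace := by
    conv_lhs => rw [h]
    rw [trace_add, trace_mul_comm, ← mul_assoc]
  rw [sub_mul, one_mul, trace_sub, htrace]
  ring

section

-- `HasDerivAt` only sees the topology of matrices; this norm is chosen because it is a ring norm.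
attribute [local instance] Matrix.linftyOpNormedAddCommGroup Matrix.linftyOpNormedSpace
  Matrix.linftyOpNormedRing Matrix.linftyOpNormedAlgebra

variable {n : Type*} [Fintype n] [DecidableEq n]

theorem Matrix.hasDerivAt_of_hasDerivAt_apply {𝕜 : Type*} [NontriviallyNormedField 𝕜]
    {m : Type*} [Fintype m] [DecidableEq m] {M : 𝕜 → Matrix m n 𝕜} {M' : Matrix m n 𝕜} {x : 𝕜}
    (h : ∀ i j, HasDerivAt (fun s => M s i j) (M' i j) x) : HasDerivAt M M' x := by
  have hexpand : ∀ N : Matrix m n 𝕜, N = ∑ i, ∑ j, N i j • single i j (1 : 𝕜) := fun N => by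
    simpa [smul_single] using matrix_eq_sum_single N
  rw [funext fun s => hexpand (M s), hexpand M']
  exact HasDerivAt.fun_sum fun i _ => HasDerivAt.fun_sum fun j _ => (h i j).smul_const _

theorem HasDerivAt.matrix_inv {𝕜 : Type*} [RCLike 𝕜] {N : 𝕜 → Matrix n n 𝕜}
    {N' : Matrix n n 𝕜} {x : 𝕜} (hN : HasDerivAt N N' x) (hx : IsUnit (N x)) :
    HasDerivAt (fun s => (N s)⁻¹) (-((N x)⁻¹ * N' * (N x)⁻¹)) x := by
  obtain ⟨u, hu⟩ := hx
  have hinv := hasFDerivAt_ringInverse (𝕜 := 𝕜) u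
  rw [hu] at hinv
  have hu' : (↑u⁻¹ : Matrix n n 𝕜) = (N x)⁻¹ := by rw [coe_units_inv, hu]
  have h := hinv.comp_hasDerivAt x hN
  simp only [Function.comp_def, ← nonsing_inv_eq_ringInverse, hu'] at h
  exact h

noncomputable def innovCov (C : Matrix n n ℝ) (s : ℝ) (X : Matrix n n ℝ) : Matrix n n ℝ :=
  C * X * Cᵀ + s ^ 2 • 1

noncomputable def riccati (A C W : Matrix n n ℝ) (s : ℝ) (X : Matrix n n ℝ) : Matrix n n ℝ :=
  A * X * Aᵀ - A * X * Cᵀ * (innovCov C s X)⁻¹ * C * X * Aᵀ + W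

/-- The matrix `F` of the paper; for symmetric `X` its transpose is the Kalman predictor gain
`A X Cᵀ (C X Cᵀ + s² I)⁻¹`. -/
noncomputable def gainTranspose (A C : Matrix n n ℝ) (s : ℝ) (X : Matrix n n ℝ) :
    Matrix n n ℝ :=
  (innovCov C s X)⁻¹ * C * X * Aᵀ

theorem transpose_innovCov (C : Matrix n n ℝ) (s : ℝ) {X : Matrix n n ℝ} (hX : Xᵀ = X) :
    (innovCov C s X)ᵀ = innovCov C s X := by
  simp [innovCov, transpose_mul, hX, mul_assoc]

theorem posDef_innovCov (C : Matrix n n ℝ) {s : ℝ} (hs : s ≠ 0) {X : Matrix n n ℝ}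
    (hX : X.PosSemidef) : (innovCov C s X).PosDef := by
  refine PosDef.posSemidef_add ?_ (PosDef.one.smul (by positivity))
  simpa [conjTranspose_eq_transpose_of_trivial] using hX.mul_mul_conjTranspose_same C

theorem hasDerivAt_riccati (A C W : Matrix n n ℝ) {S : ℝ → Matrix n n ℝ} {S' : Matrix n n ℝ}
    {x : ℝ} (hS : HasDerivAt S S' x) (hsymm : (S x)ᵀ = S x) (hN : IsUnit (innovCov C x (S x))) :
    HasDerivAt (fun s => riccati A C W s (S s))
      ((Aᵀ - Cᵀ * gainTranspose A C x (S x))ᵀ * S' * (Aᵀ - Cᵀ * gainTranspose A C x (S x)) +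
        (2 * x) • ((gainTranspose A C x (S x))ᵀ * gainTranspose A C x (S x))) x := by
  set G := (innovCov C x (S x))⁻¹
  have hG : Gᵀ = G := by rw [transpose_nonsing_inv, transpose_innovCov C x hsymm]
  have hF : (gainTranspose A C x (S x))ᵀ = A * S x * Cᵀ * G := by
    simp [gainTranspose, G, transpose_mul, hsymm, hG, mul_assoc]
  set N' := C * S' * Cᵀ + (2 * x) • (1 : Matrix n n ℝ)
  have hinnov : HasDerivAt (fun s => innovCov C s (S s)) N' x :=
    (((hS.const_mul C).mul_const Cᵀ).add ((hasDerivAt_pow 2 x).smul_const 1)).congr_deriv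
      (by norm_num [N'])
  have hR : HasDerivAt (fun s => riccati A C W s (S s))
      (A * S' * Aᵀ - ((A * S' * Cᵀ * G + A * S x * Cᵀ * -(G * N' * G)) * C * S x +
        A * S x * Cᵀ * G * C * S') * Aᵀ) x :=
    (((hS.const_mul A).mul_const Aᵀ).sub ((((((hS.const_mul A).mul_const Cᵀ).mul
      (hinnov.matrix_inv hN)).mul_const C).mul hS).mul_const Aᵀ)).add_const W
  refine hR.congr_deriv ?_
  rw [transpose_sub, transpose_transpose, transpose_mul, transpose_transpose, hF,
    ← smul_mul_assoc, ← mul_smul_one]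
  simp only [gainTranspose, G, N']
  generalize (2 * x) • (1 : Matrix n n ℝ) = T
  noncomm_ring

theorem riccati_fixedPoint_deriv_eq (A C W : Matrix n n ℝ) {S : ℝ → Matrix n n ℝ}
    {S' : Matrix n n ℝ} {x : ℝ} (hderiv : ∀ i j, HasDerivAt (fun s => S s i j) (S' i j) x)
    (hsymm : (S x)ᵀ = S x) (hN : IsUnit (innovCov C x (S x)))
    (hric : ∀ᶠ s in nhds x, S s = riccati A C W s (S s)) :
    S' = (Aᵀ - Cᵀ * gainTranspose A C x (S x))ᵀ * S' * (Aᵀ - Cᵀ * gainTranspose A C x (S x)) +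
      (2 * x) • ((gainTranspose A C x (S x))ᵀ * gainTranspose A C x (S x)) :=
  have hS := Matrix.hasDerivAt_of_hasDerivAt_apply hderiv
  hS.unique ((hasDerivAt_riccati A C W hS hsymm hN).congr_of_eventuallyEq hric)

end

theorem riccati_derivative_identity_general {n : ℕ}
    (A C W : Matrix (Fin n) (Fin n) ℝ) (σ₀ : ℝ) (hσ₀ : 0 < σ₀)
    (S : ℝ → Matrix (Fin n) (Fin n) ℝ) (S' : Matrix (Fin n) (Fin n) ℝ)
    (hderiv : ∀ i j, HasDerivAt (fun s => S s i j) (S' i j) σ₀)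
    (hpos : ∀ s, (S s).PosDef)
    (hric : ∀ᶠ s in nhds σ₀, S s = A * S s * Aᵀ -
        A * S s * Cᵀ * (C * S s * Cᵀ + s ^ 2 • (1 : Matrix (Fin n) (Fin n) ℝ))⁻¹ *
          C * S s * Aᵀ + W) :
    (((Aᵀ - (Cᵀ * (C * S σ₀ * Cᵀ + σ₀ ^ 2 • (1 : Matrix (Fin n) (Fin n) ℝ))⁻¹ * C * S σ₀ * Aᵀ)) * (A - (Cᵀ * (C * S σ₀ * Cᵀ + σ₀ ^ 2 • (1 : Matrix (Fin n) (Fin n) ℝ))⁻¹ * C * S σ₀ * Aᵀ)ᵀ) - 1) * S').trace =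
      -2 * σ₀ * ((((C * S σ₀ * Cᵀ + σ₀ ^ 2 • (1 : Matrix (Fin n) (Fin n) ℝ))⁻¹ * C * S σ₀ * Aᵀ)ᵀ * ((C * S σ₀ * Cᵀ + σ₀ ^ 2 • (1 : Matrix (Fin n) (Fin n) ℝ))⁻¹ * C * S σ₀ * Aᵀ)).trace) := by
  have hsymm : (S σ₀)ᵀ = S σ₀ := by
    simpa [conjTranspose_eq_transpose_of_trivial] using (hpos σ₀).isHermitian.eq
  have hN := (posDef_innovCov C hσ₀.ne' (hpos σ₀).posSemidef).isUnit
  have hstein := riccati_fixedPoint_deriv_eq A C W hderiv hsymm hN hric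
  have htrace := trace_mul_transpose_sub_one_mul_of_eq hstein
  rw [transpose_sub, transpose_transpose, trace_smul, smul_eq_mul] at htrace
  have hP : Cᵀ * (C * S σ₀ * Cᵀ + σ₀ ^ 2 • 1)⁻¹ * C * S σ₀ * Aᵀ =
      Cᵀ * gainTranspose A C σ₀ (S σ₀) := by
    simp only [gainTranspose, innovCov, mul_assoc]
  change _ = -2 * σ₀ * ((gainTranspose A C σ₀ (S σ₀))ᵀ * gainTranspose A C σ₀ (S σ₀)).trace
  rw [hP, htrace]
  ring

/-- Derivative identity for the a priori covariance: if `S(s)` solves the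
privacy-parameterized Riccati equation near `σ₀` and is (entrywise)
differentiable at `σ₀` with derivative `S'`, then
`tr(U · S'(σ₀)) = −2σ₀ · tr(FᵀF)` where
`P = Cᵀ(C S Cᵀ + V)⁻¹ C S Aᵀ`, `F = (C S Cᵀ + V)⁻¹ C S Aᵀ`,
`U = (Aᵀ − P)(A − Pᵀ) − I`, and `V = σ₀² I`. -/
theorem riccati_derivative_identity {n : ℕ}
    (A C W : Matrix (Fin n) (Fin n) ℝ) (hW : W.PosDef) (σ₀ : ℝ) (hσ₀ : 0 < σ₀)
    (S : ℝ → Matrix (Fin n) (Fin n) ℝ) (S' : Matrix (Fin n) (Fin n) ℝ)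
    (hderiv : ∀ i j, HasDerivAt (fun s => S s i j) (S' i j) σ₀)
    (hpos : ∀ s, (S s).PosDef)
    (hric : ∀ᶠ s in nhds σ₀, S s = A * S s * Aᵀ -
        A * S s * Cᵀ * (C * S s * Cᵀ + s ^ 2 • (1 : Matrix (Fin n) (Fin n) ℝ))⁻¹ *
          C * S s * Aᵀ + W) :
    (((Aᵀ - (Cᵀ * (C * S σ₀ * Cᵀ + σ₀ ^ 2 • (1 : Matrix (Fin n) (Fin n) ℝ))⁻¹ * C * S σ₀ * Aᵀ)) * (A - (Cᵀ * (C * S σ₀ * Cᵀ + σ₀ ^ 2 • (1 : Matrix (Fin n) (Fin n) ℝ))⁻¹ * C * S σ₀ * Aᵀ)ᵀ) - 1) * S').trace =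
      -2 * σ₀ * ((((C * S σ₀ * Cᵀ + σ₀ ^ 2 • (1 : Matrix (Fin n) (Fin n) ℝ))⁻¹ * C * S σ₀ * Aᵀ)ᵀ * ((C * S σ₀ * Cᵀ + σ₀ ^ 2 • (1 : Matrix (Fin n) (Fin n) ℝ))⁻¹ * C * S σ₀ * Aᵀ)).trace) :=
  riccati_derivative_identity_general A C W σ₀ hσ₀ S S' hderiv hpos hric
end

section
/- (Derivative identity for the a posteriori covariance) Let A, C, W be real n×n matrices with W symmetric positive definite, and let σ₀ > 0. Suppose Σ : ℝ → ℝ^{n×n} is differentiable at σ₀, takes symmetric positive definite values, and satisfies, for all s in a neighborhood of σ₀, the parameterized Riccati equation Σ(s) = A Σ(s) Aᵀ − A Σ(s) Cᵀ (C Σ(s) Cᵀ + s²·I)⁻¹ C Σ(s) Aᵀ + W, and define Σ̄(s) := Σ(s) − Σ(s) Cᵀ (C Σ(s) Cᵀ + s²·I)⁻¹ C Σ(s). Writing V := σ₀²·I, Σ := Σ(σ₀), P̄ := Cᵀ(C Σ Cᵀ + V)⁻¹ C Σ, F̄ := (C Σ Cᵀ + V)⁻¹ C Σ, and Ū := (I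 − P̄)(I − P̄ᵀ), the function s ↦ tr(Σ̄(s)) is differentiable at σ₀ with derivative tr( Σ'(σ₀) · Ū ) + 2σ₀ · tr( F̄ᵀ F̄ ). -/
/-!
Write `M(s) = C Σ(s) Cᵀ + V(s)`. The product rule and `(M⁻¹)' = -M⁻¹ M' M⁻¹` give, in any Banach
algebra, the Joseph form `Σ̄' = (I - Σ Cᵀ M⁻¹ C) Σ' (I - Cᵀ M⁻¹ C Σ) + Σ Cᵀ M⁻¹ V' M⁻¹ C Σ`.
For symmetric `Σ`, hence symmetric `M`, the outer factors are `I - P̄ᵀ` and `I - P̄`, and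
`Σ Cᵀ M⁻¹ = F̄ᵀ`; with `V' = 2σ₀ I` and cyclicity of the trace this is the formula.
-/

open Matrix

section BanachAlgebra

variable {𝕜 𝔸 : Type*} [NontriviallyNormedField 𝕜] [NormedRing 𝔸] [NormedAlgebra 𝕜 𝔸]
  [HasSummableGeomSeries 𝔸] {x : 𝕜}

theorem HasDerivAt.ringInverse {f : 𝕜 → 𝔸} {f' : 𝔸} (hf : HasDerivAt f f' x)
    (hx : IsUnit (f x)) :
    HasDerivAt (fun s => Ring.inverse (f s))
      (-(Ring.inverse (f x) * f' * Ring.inverse (f x))) x := by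
  obtain ⟨u, hu⟩ := hx
  have hinv := hasFDerivAt_ringInverse (𝕜 := 𝕜) u
  rw [hu] at hinv
  rw [← hu, Ring.inverse_unit]
  simpa [Function.comp_def] using hinv.comp_hasDerivAt x hf

theorem hasDerivAt_posterior {S V : 𝕜 → 𝔸} {S' V' : 𝔸} (c d : 𝔸)
    (hS : HasDerivAt S S' x) (hV : HasDerivAt V V' x) (hM : IsUnit (c * S x * d + V x)) :
    HasDerivAt (fun s => S s - S s * d * Ring.inverse (c * S s * d + V s) * c * S s)
      ((1 - S x * d * Ring.inverse (c * S x * d + V x) * c) * S' *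
          (1 - d * Ring.inverse (c * S x * d + V x) * c * S x) +
        S x * d * Ring.inverse (c * S x * d + V x) * V' *
          Ring.inverse (c * S x * d + V x) * c * S x) x := by
  have hN := (((hS.const_mul c).mul_const d).fun_add hV).ringInverse hM
  refine (hS.fun_sub ((((hS.mul_const d).fun_mul hN).mul_const c).fun_mul hS)).congr_deriv ?_
  noncomm_ring

end BanachAlgebra

theorem Matrix.PosSemidef.mul_mul_transpose_add_posDef {m p : Type*} [Fintype m] [Fintype p]
    {S : Matrix m m ℝ} {V : Matrix p p ℝ} (hS : S.PosSemidef) (hV : V.PosDef) (C : Matrix p m ℝ) :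
    (C * S * Cᵀ + V).PosDef := by
  refine PosDef.posSemidef_add ?_ hV
  simpa only [conjTranspose_eq_transpose_of_trivial] using hS.mul_mul_conjTranspose_same C

theorem Matrix.trace_posterior_derivative_eq {m p R : Type*} [Fintype m] [DecidableEq m] [Fintype p]
    [DecidableEq p] [CommRing R]
    {S₀ S' : Matrix m m R} {N : Matrix p p R} (C : Matrix p m R) (hS₀ : S₀ᵀ = S₀) (hN : Nᵀ = N)
    (r : R) :
    ((1 - S₀ * Cᵀ * N * C) * S' * (1 - Cᵀ * N * C * S₀) +
        S₀ * Cᵀ * N * (r • (1 : Matrix p p R)) * N * C * S₀).trace =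
      (S' * ((1 - Cᵀ * N * C * S₀) * (1 - (Cᵀ * N * C * S₀)ᵀ))).trace +
        r * ((N * C * S₀)ᵀ * (N * C * S₀)).trace := by
  have hP : (Cᵀ * N * C * S₀)ᵀ = S₀ * Cᵀ * N * C := by
    simp only [transpose_mul, hS₀, hN, transpose_transpose, Matrix.mul_assoc]
  have hF : (N * C * S₀)ᵀ = S₀ * Cᵀ * N := by
    simp only [transpose_mul, hS₀, hN, Matrix.mul_assoc]
  rw [hP, hF, trace_add]
  congr 1
  · rw [trace_mul_cycle, trace_mul_comm]
  · simp [Matrix.mul_assoc]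

section LinftyOp

-- Any norm gives the same derivatives; this one makes square matrices a Banach algebra.
attribute [local instance] Matrix.linftyOpNormedAddCommGroup Matrix.linftyOpNormedRing
  Matrix.linftyOpNormedAlgebra Matrix.linftyOpNormedSpace

variable {m : Type*} [Fintype m]

theorem Matrix.hasDerivAt_of_forall_hasDerivAt_apply {f : ℝ → Matrix m m ℝ} {f' : Matrix m m ℝ}
    {x : ℝ} (h : ∀ i j, HasDerivAt (fun s => f s i j) (f' i j) x) : HasDerivAt f f' x := by
  let e := (Matrix.ofLinearEquiv ℝ (m := m) (n := m) (α := ℝ)).toContinuousLinearEquiv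
  have : HasDerivAt (fun s => e.symm (f s)) (e.symm f') x :=
    hasDerivAt_pi.2 fun i => hasDerivAt_pi.2 fun j => h i j
  have := e.hasFDerivAt.comp_hasDerivAt x this
  simp only [Function.comp_def] at this
  exact this

theorem Matrix.hasDerivAt_trace {f : ℝ → Matrix m m ℝ} {f' : Matrix m m ℝ} {x : ℝ}
    (h : HasDerivAt f f' x) : HasDerivAt (fun s => (f s).trace) f'.trace x :=
  (Matrix.traceLinearMap m ℝ ℝ).toContinuousLinearMap.hasFDerivAt.comp_hasDerivAt x h

theorem Matrix.hasDerivAt_sq_smul_one [DecidableEq m] (x : ℝ) :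
    HasDerivAt (fun s : ℝ => s ^ 2 • (1 : Matrix m m ℝ)) ((2 * x) • 1) x := by
  refine ((hasDerivAt_pow 2 x).smul_const (1 : Matrix m m ℝ)).congr_deriv ?_
  simp

theorem Matrix.hasDerivAt_trace_posterior [DecidableEq m] {S : ℝ → Matrix m m ℝ}
    {S' : Matrix m m ℝ} {x : ℝ} (C : Matrix m m ℝ)
    (hS : ∀ i j, HasDerivAt (fun s => S s i j) (S' i j) x) (hSx : (S x)ᵀ = S x)
    (hM : IsUnit (C * S x * Cᵀ + x ^ 2 • (1 : Matrix m m ℝ))) :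
    HasDerivAt
      (fun s => (S s - S s * Cᵀ * (C * S s * Cᵀ + s ^ 2 • (1 : Matrix m m ℝ))⁻¹ * C * S s).trace)
      ((S' * ((1 - Cᵀ * (C * S x * Cᵀ + x ^ 2 • (1 : Matrix m m ℝ))⁻¹ * C * S x) *
          (1 - (Cᵀ * (C * S x * Cᵀ + x ^ 2 • (1 : Matrix m m ℝ))⁻¹ * C * S x)ᵀ))).trace +
        2 * x * (((C * S x * Cᵀ + x ^ 2 • (1 : Matrix m m ℝ))⁻¹ * C * S x)ᵀ *
          ((C * S x * Cᵀ + x ^ 2 • (1 : Matrix m m ℝ))⁻¹ * C * S x)).trace) x := by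
  have hN : ((C * S x * Cᵀ + x ^ 2 • (1 : Matrix m m ℝ))⁻¹)ᵀ =
      (C * S x * Cᵀ + x ^ 2 • (1 : Matrix m m ℝ))⁻¹ := by
    simp [transpose_nonsing_inv, transpose_mul, hSx, Matrix.mul_assoc]
  have hpost := hasDerivAt_posterior C Cᵀ (hasDerivAt_of_forall_hasDerivAt_apply hS)
    (hasDerivAt_sq_smul_one x) hM
  simp only [← nonsing_inv_eq_ringInverse] at hpost
  rw [← trace_posterior_derivative_eq C hSx hN]
  exact hasDerivAt_trace hpost

end LinftyOp

theorem riccati_posterior_derivative_identity_general {n : ℕ}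
    (C : Matrix (Fin n) (Fin n) ℝ) (σ₀ : ℝ) (hσ₀ : 0 < σ₀)
    (S : ℝ → Matrix (Fin n) (Fin n) ℝ) (S' : Matrix (Fin n) (Fin n) ℝ)
    (hderiv : ∀ i j, HasDerivAt (fun s => S s i j) (S' i j) σ₀)
    (hpos : ∀ s, (S s).PosDef) :
    HasDerivAt (fun s => (S s - S s * Cᵀ * (C * S s * Cᵀ + s ^ 2 • (1 : Matrix (Fin n) (Fin n) ℝ))⁻¹ * C * S s).trace)
      ((S' * ((1 - (Cᵀ * (C * S σ₀ * Cᵀ + σ₀ ^ 2 • (1 : Matrix (Fin n) (Fin n) ℝ))⁻¹ * C * S σ₀)) * (1 - (Cᵀ * (C * S σ₀ * Cᵀ + σ₀ ^ 2 • (1 : Matrix (Fin n) (Fin n) ℝ))⁻¹ * C * S σ₀)ᵀ))).trace +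
        2 * σ₀ * ((((C * S σ₀ * Cᵀ + σ₀ ^ 2 • (1 : Matrix (Fin n) (Fin n) ℝ))⁻¹ * C * S σ₀)ᵀ * ((C * S σ₀ * Cᵀ + σ₀ ^ 2 • (1 : Matrix (Fin n) (Fin n) ℝ))⁻¹ * C * S σ₀)).trace)) σ₀ := by
  have hsymm : (S σ₀)ᵀ = S σ₀ :=
    (conjTranspose_eq_transpose_of_trivial _).symm.trans (hpos σ₀).isHermitian
  have hM : (C * S σ₀ * Cᵀ + σ₀ ^ 2 • (1 : Matrix (Fin n) (Fin n) ℝ)).PosDef :=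
    (hpos σ₀).posSemidef.mul_mul_transpose_add_posDef (PosDef.one.smul (pow_pos hσ₀ 2)) C
  exact hasDerivAt_trace_posterior C hderiv hsymm hM.isUnit

/-- Derivative identity for the a posteriori covariance: if `S(s)` solves the
privacy-parameterized Riccati equation near `σ₀` and is (entrywise)
differentiable at `σ₀` with derivative `S'`, then `s ↦ tr(S̄(s))` is
differentiable at `σ₀` with derivative `tr(S'·Ū) + 2σ₀·tr(F̄ᵀF̄)`, where
`S̄(s) = S(s) − S(s)Cᵀ(C S(s) Cᵀ + s²I)⁻¹ C S(s)`, `P̄ = Cᵀ(C S Cᵀ + V)⁻¹ C S`,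
`F̄ = (C S Cᵀ + V)⁻¹ C S`, `Ū = (I − P̄)(I − P̄ᵀ)`, and `V = σ₀² I`. -/
theorem riccati_posterior_derivative_identity {n : ℕ}
    (A C W : Matrix (Fin n) (Fin n) ℝ) (hW : W.PosDef) (σ₀ : ℝ) (hσ₀ : 0 < σ₀)
    (S : ℝ → Matrix (Fin n) (Fin n) ℝ) (S' : Matrix (Fin n) (Fin n) ℝ)
    (hderiv : ∀ i j, HasDerivAt (fun s => S s i j) (S' i j) σ₀)
    (hpos : ∀ s, (S s).PosDef)
    (hric : ∀ᶠ s in nhds σ₀, S s = A * S s * Aᵀ -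
        A * S s * Cᵀ * (C * S s * Cᵀ + s ^ 2 • (1 : Matrix (Fin n) (Fin n) ℝ))⁻¹ *
          C * S s * Aᵀ + W) :
    HasDerivAt (fun s => (S s - S s * Cᵀ * (C * S s * Cᵀ + s ^ 2 • (1 : Matrix (Fin n) (Fin n) ℝ))⁻¹ * C * S s).trace)
      ((S' * ((1 - (Cᵀ * (C * S σ₀ * Cᵀ + σ₀ ^ 2 • (1 : Matrix (Fin n) (Fin n) ℝ))⁻¹ * C * S σ₀)) * (1 - (Cᵀ * (C * S σ₀ * Cᵀ + σ₀ ^ 2 • (1 : Matrix (Fin n) (Fin n) ℝ))⁻¹ * C * S σ₀)ᵀ))).trace +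
        2 * σ₀ * ((((C * S σ₀ * Cᵀ + σ₀ ^ 2 • (1 : Matrix (Fin n) (Fin n) ℝ))⁻¹ * C * S σ₀)ᵀ * ((C * S σ₀ * Cᵀ + σ₀ ^ 2 • (1 : Matrix (Fin n) (Fin n) ℝ))⁻¹ * C * S σ₀)).trace)) σ₀ :=
  riccati_posterior_derivative_identity_general C σ₀ hσ₀ S S' hderiv hpos
end
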